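/- arXiv:1809.02039 — 7 statements merged into one kernel-verified Lean document; each statement's English description precedes it below -/
import Mathlib

section
/- Let n > l ≥ 2m. The set of tuples (u_1,…,u_m) ∈ (ℝ^n)^m such that, for every integer α with 2 ≤ α ≤ n-l+1, the 2m vectors u_1|_1^l, u_1|_α^{α+l-1}, u_2|_1^l, u_2|_α^{α+l-1}, …, u_m|_1^l, u_m|_α^{α+l-1} are linearly independent in ℝ^l, is open and dense in (ℝ^n)^m. -/
/-- The window u|_α^{α+l-1} = (x_α, …, x_{α+l-1}) of length `l` of a vector
`u ∈ ℝ^n`, starting at the (1-indexed) position `α`.  (Out-of-range coordinates,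
which never occur for the α considered below, are set to 0.) -/
def window (n l α : ℕ) (u : Fin n → ℝ) : Fin l → ℝ :=
  fun k => if h : α - 1 + (k : ℕ) < n then u ⟨α - 1 + (k : ℕ), h⟩ else 0

open Matrix


/-- Gram criterion: `det (M * Mᵀ) ≠ 0` iff the rows of `M` are linearly independent. -/
lemma gram_det_ne_zero_iff {ι κ : Type*} [Fintype ι] [Fintype κ] [DecidableEq ι]
    (M : Matrix ι κ ℝ) :
    (M * Mᵀ).det ≠ 0 ↔ LinearIndependent ℝ (fun i => M i) := by
  constructor
  · intro hdet
    have hunit : IsUnit (M * Mᵀ) := (Matrix.isUnit_iff_isUnit_det _).2 (isUnit_iff_ne_zero.2 hdet)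
    rw [Fintype.linearIndependent_iff]
    intro g hg
    have hgM : Matrix.vecMul g M = 0 := by
      funext k
      have := congrFun hg k
      simpa [Matrix.vecMul, dotProduct, Finset.sum_apply] using this
    have hinj : Function.Injective (M * Mᵀ).vecMul :=
      Matrix.vecMul_injective_iff_isUnit.2 hunit
    have : Matrix.vecMul g (M * Mᵀ) = Matrix.vecMul (0 : ι → ℝ) (M * Mᵀ) := by
      rw [← Matrix.vecMul_vecMul, hgM]
      simp
    intro i
    exact congrFun (hinj this) i
  · intro hli hdet
    rw [Fintype.linearIndependent_iff] at hli
    have : ¬ IsUnit (M * Mᵀ) := fun h => (isUnit_iff_ne_zero.1 ((Matrix.isUnit_iff_isUnit_det _).1 h)) hdet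
    have hninj : ¬ Function.Injective (M * Mᵀ).mulVec :=
      fun h => this (Matrix.mulVec_injective_iff_isUnit.1 h)
    rw [Function.not_injective_iff] at hninj
    obtain ⟨a, b, hab, hne⟩ := hninj
    set c := a - b with hc
    have hGc : (M * Mᵀ).mulVec c = 0 := by
      rw [hc, Matrix.mulVec_sub, hab, sub_self]
    have hcne : c ≠ 0 := sub_ne_zero.2 hne
    have hw : Matrix.vecMul c M = 0 := by
      have h0 : Matrix.vecMul c M ⬝ᵥ Matrix.vecMul c M = 0 := by
        have : c ⬝ᵥ (M * Mᵀ).mulVec c = 0 := by rw [hGc]; simp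
        rwa [← Matrix.mulVec_mulVec, Matrix.dotProduct_mulVec, Matrix.mulVec_transpose] at this
      exact dotProduct_self_eq_zero.1 h0
    have : ∀ i, c i = 0 := by
      apply hli c
      funext k
      have := congrFun hw k
      simpa [Matrix.vecMul, dotProduct, Finset.sum_apply] using this
    exact hcne (funext this)

/-- Vandermonde-type rows are linearly independent. -/
lemma vandermonde_rows_li {c l : ℕ} (hcl : c ≤ l) (t : Fin c → ℝ) (ht : Function.Injective t) :
    LinearIndependent ℝ (fun i => fun k : Fin l => t i ^ (k : ℕ)) := by
  have hdet : (Matrix.vandermonde t).det ≠ 0 :=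
    Matrix.det_vandermonde_ne_zero_iff.2 ht
  have hunit : IsUnit (Matrix.vandermonde t) :=
    (Matrix.isUnit_iff_isUnit_det _).2 (isUnit_iff_ne_zero.2 hdet)
  have hli : LinearIndependent ℝ (fun i => Matrix.vandermonde t i) :=
    Matrix.linearIndependent_rows_iff_isUnit.2 hunit
  have heq : (⇑(LinearMap.funLeft ℝ ℝ (Fin.castLE hcl)) ∘ fun i => fun k : Fin l => t i ^ (k : ℕ))
      = fun i => Matrix.vandermonde t i := by
    funext i j
    simp [LinearMap.funLeft, Matrix.vandermonde]
  exact LinearIndependent.of_comp (LinearMap.funLeft ℝ ℝ (Fin.castLE hcl)) (heq ▸ hli)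

/-- The matrix whose rows are the two windows (positions `1` and `α`) of the `m` vectors,
defined over an arbitrary commutative ring. -/
def wmat (n l m α : ℕ) (R : Type) [CommRing R] (u : Fin m → Fin n → R) :
    Matrix (Fin m × Bool) (Fin l) R :=
  Matrix.of fun p k =>
    if h : (if p.2 then α else 1) - 1 + (k : ℕ) < n then u p.1 ⟨_, h⟩ else 0

/-- Product over all relevant `α` of the Gram determinants of the window matrices. -/
def gpol (n l m : ℕ) (R : Type) [CommRing R] (u : Fin m → Fin n → R) : R :=
  ∏ α ∈ Finset.Icc 2 (n - l + 1), ((wmat n l m α R u) * (wmat n l m α R u)ᵀ).det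

lemma wmat_rows (n l m α : ℕ) (u : Fin m → Fin n → ℝ) :
    (fun p : Fin m × Bool =>
        if p.2 then window n l α (u p.1) else window n l 1 (u p.1))
      = fun p => wmat n l m α ℝ u p := by
  funext p k
  rcases p with ⟨i, b⟩
  cases b <;> rfl

lemma gpol_map {n l m : ℕ} {R S : Type} [CommRing R] [CommRing S] (φ : R →+* S)
    (u : Fin m → Fin n → R) :
    φ (gpol n l m R u) = gpol n l m S (fun i j => φ (u i j)) := by
  rw [gpol, gpol, map_prod]
  refine Finset.prod_congr rfl fun α _ => ?_
  rw [RingHom.map_det]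
  congr 1
  have hmap : (wmat n l m α R u).map φ = wmat n l m α S (fun i j => φ (u i j)) := by
    funext p k
    simp [wmat, apply_dite φ]
  simp only [RingHom.mapMatrix_apply, Matrix.map_mul, Matrix.transpose_map, hmap]

lemma gpol_continuous (n l m : ℕ) : Continuous fun u : Fin m → Fin n → ℝ => gpol n l m ℝ u := by
  unfold gpol
  apply continuous_finset_prod
  intro α _
  have hw : Continuous fun u : Fin m → Fin n → ℝ => wmat n l m α ℝ u := by
    apply continuous_matrix
    intro p k
    simp only [wmat, Matrix.of_apply]
    by_cases h : (if p.2 then α else 1) - 1 + (k : ℕ) < n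
    · simp only [dif_pos h]
      exact (continuous_apply _).comp (continuous_apply _)
    · simp only [dif_neg h]
      exact continuous_const
  exact (hw.matrix_mul hw.matrix_transpose).matrix_det

/-- The parameters `1, 2, …, 2m` indexed by `Fin m × Bool`. -/
def tt (m : ℕ) (p : Fin m × Bool) : ℝ := ((2 * (p.1 : ℕ) + cond p.2 2 1 : ℕ) : ℝ)

lemma tt_inj (m : ℕ) : Function.Injective (tt m) := by
  rintro ⟨i, b⟩ ⟨j, b'⟩ h
  simp only [tt, Nat.cast_inj] at h
  have hb : b = b' := by
    cases b <;> cases b' <;> simp only [cond_true, cond_false] at h <;> first | rfl | omega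
  subst hb
  have hij : (i : ℕ) = j := by
    cases b <;> simp only [cond_true, cond_false] at h <;> omega
  exact Prod.ext (Fin.ext hij) rfl

noncomputable def ustar (n m : ℕ) : Fin m → Fin n → ℝ :=
  fun i j => tt m (i, false) ^ (j : ℕ) + tt m (i, true) ^ (j : ℕ)

lemma tt_pos (m : ℕ) (p : Fin m × Bool) : 0 < tt m p := by
  have h : 0 < 2 * (p.1 : ℕ) + cond p.2 2 1 := by cases p.2 <;> simp
  unfold tt
  exact_mod_cast h

lemma tt_lt (m : ℕ) (i : Fin m) : tt m (i, false) < tt m (i, true) := by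
  have h : 2 * (i : ℕ) + cond false 2 1 < 2 * (i : ℕ) + cond true 2 1 := by simp
  unfold tt
  exact_mod_cast h

/-- The family of monomial rows indexed by `Fin m × Bool` is linearly independent. -/
lemma wfam_li (m l : ℕ) (hml : 2 * m ≤ l) :
    LinearIndependent ℝ (fun q : Fin m × Bool => fun k : Fin l => tt m q ^ (k : ℕ)) := by
  let e := Fintype.equivFin (Fin m × Bool)
  have hcard : Fintype.card (Fin m × Bool) ≤ l := by
    simp only [Fintype.card_prod, Fintype.card_fin, Fintype.card_bool]
    omega
  have h := vandermonde_rows_li hcard (tt m ∘ e.symm) ((tt_inj m).comp e.symm.injective)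
  exact (linearIndependent_equiv e.symm
    (f := fun q : Fin m × Bool => fun k : Fin l => tt m q ^ (k : ℕ))).1 h

/-- The witness tuple makes all the Gram determinants nonzero. -/
lemma gpol_ustar_ne_zero (n l m : ℕ) (hnl : n > l) (hlm : l ≥ 2 * m) :
    gpol n l m ℝ (ustar n m) ≠ 0 := by
  rw [gpol, Finset.prod_ne_zero_iff]
  intro α hα
  rw [Finset.mem_Icc] at hα
  rw [gram_det_ne_zero_iff]
  -- explicit formula for the rows of the window matrix of the witness
  have hrow : ∀ (i : Fin m) (b : Bool) (k : Fin l),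
      wmat n l m α ℝ (ustar n m) (i, b) k =
        tt m (i, false) ^ (cond b (α - 1) 0) * tt m (i, false) ^ (k : ℕ)
        + tt m (i, true) ^ (cond b (α - 1) 0) * tt m (i, true) ^ (k : ℕ) := by
    intro i b k
    have hk := k.isLt
    have hlt : (if b then α else 1) - 1 + (k : ℕ) < n := by
      cases b <;> simp <;> omega
    simp only [wmat, Matrix.of_apply, dif_pos hlt, ustar]
    cases b <;> simp [← pow_add]
  rw [Fintype.linearIndependent_iff]
  intro c hc
  set d : Fin m × Bool → ℝ :=
    fun q => c (q.1, false) + c (q.1, true) * tt m q ^ (α - 1) with hd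
  have hsum : ∑ q : Fin m × Bool, d q • (fun k : Fin l => tt m q ^ (k : ℕ)) = 0 := by
    funext k
    have h1 : ∑ p : Fin m × Bool, c p * wmat n l m α ℝ (ustar n m) p k = 0 := by
      have := congrFun hc k
      simpa [Finset.sum_apply] using this
    have h2 : ∑ q : Fin m × Bool, d q * tt m q ^ (k : ℕ)
        = ∑ p : Fin m × Bool, c p * wmat n l m α ℝ (ustar n m) p k := by
      rw [Fintype.sum_prod_type, Fintype.sum_prod_type]
      refine Finset.sum_congr rfl fun i _ => ?_
      rw [Fintype.sum_bool, Fintype.sum_bool, hrow i true k, hrow i false k]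
      simp only [hd, cond_true, cond_false, pow_zero]
      ring
    simpa [Finset.sum_apply, h2] using h1
  have hd0 : ∀ q, d q = 0 := (Fintype.linearIndependent_iff.1 (wfam_li m l hlm)) d hsum
  rintro ⟨i, b⟩
  have e0 := hd0 (i, false)
  have e1 := hd0 (i, true)
  simp only [hd] at e0 e1
  have hne : tt m (i, false) ^ (α - 1) ≠ tt m (i, true) ^ (α - 1) := by
    have := pow_lt_pow_left₀ (tt_lt m i) (le_of_lt (tt_pos m (i, false))) (by omega : α - 1 ≠ 0)
    exact ne_of_lt this
  have hct : c (i, true) = 0 := by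
    by_contra hcc
    apply hne
    have h := sub_eq_zero.1 (by linarith : c (i, true) * tt m (i, false) ^ (α - 1)
      - c (i, true) * tt m (i, true) ^ (α - 1) = 0)
    exact mul_left_cancel₀ hcc h
  have hcf : c (i, false) = 0 := by
    have := e0
    rw [hct] at this
    linarith
  cases b
  · exact hcf
  · exact hct

lemma mem_iff (n l m : ℕ) (u : Fin m → Fin n → ℝ) :
    (∀ α : ℕ, 2 ≤ α → α ≤ n - l + 1 →
        LinearIndependent ℝ (fun p : Fin m × Bool =>
          if p.2 then window n l α (u p.1) else window n l 1 (u p.1)))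
      ↔ gpol n l m ℝ u ≠ 0 := by
  rw [gpol, Finset.prod_ne_zero_iff]
  constructor
  · intro h α hα
    rw [Finset.mem_Icc] at hα
    rw [gram_det_ne_zero_iff]
    have := h α hα.1 hα.2
    rwa [wmat_rows] at this
  · intro h α h1 h2
    have := h α (Finset.mem_Icc.2 ⟨h1, h2⟩)
    rw [gram_det_ne_zero_iff] at this
    rwa [wmat_rows n l m α u]

/-- For n > l ≥ 2m, the set of tuples (u_1,…,u_m) ∈ (ℝ^n)^m such that for
every integer α with 2 ≤ α ≤ n-l+1 the 2m vectors
u_1|_1^l, u_1|_α^{α+l-1}, …, u_m|_1^l, u_m|_α^{α+l-1} are linearly independent in ℝ^l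
is open and dense in (ℝ^n)^m. -/
theorem stmt5 (n l m : ℕ) (hnl : n > l) (hlm : l ≥ 2 * m) :
    IsOpen {u : Fin m → Fin n → ℝ |
        ∀ α : ℕ, 2 ≤ α → α ≤ n - l + 1 →
          LinearIndependent ℝ (fun p : Fin m × Bool =>
            if p.2 then window n l α (u p.1) else window n l 1 (u p.1))} ∧
    Dense {u : Fin m → Fin n → ℝ |
        ∀ α : ℕ, 2 ≤ α → α ≤ n - l + 1 →
          LinearIndependent ℝ (fun p : Fin m × Bool =>
            if p.2 then window n l α (u p.1) else window n l 1 (u p.1))} := by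
  have hset : {u : Fin m → Fin n → ℝ |
      ∀ α : ℕ, 2 ≤ α → α ≤ n - l + 1 →
        LinearIndependent ℝ (fun p : Fin m × Bool =>
          if p.2 then window n l α (u p.1) else window n l 1 (u p.1))}
      = (fun u => gpol n l m ℝ u) ⁻¹' ({0}ᶜ) := by
    ext u
    simpa using mem_iff n l m u
  constructor
  · rw [hset]
    exact isOpen_compl_singleton.preimage (gpol_continuous n l m)
  · rw [hset, Metric.dense_iff]
    intro u₀ r hr
    set dd : Fin m → Fin n → ℝ := ustar n m - u₀ with hdd
    set U : Fin m → Fin n → Polynomial ℝ :=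
      fun i j => Polynomial.C (u₀ i j) + Polynomial.C (dd i j) * Polynomial.X with hU
    set q : Polynomial ℝ := gpol n l m (Polynomial ℝ) U with hq
    have heval : ∀ s : ℝ,
        Polynomial.eval s q = gpol n l m ℝ (fun i j => u₀ i j + dd i j * s) := by
      intro s
      have := gpol_map (n := n) (l := l) (m := m) (Polynomial.evalRingHom s) U
      simpa [hU] using this
    have hq1 : Polynomial.eval 1 q ≠ 0 := by
      rw [heval 1]
      have : (fun i j => u₀ i j + dd i j * 1) = ustar n m := by
        funext i j
        simp [hdd]
      rw [this]
      exact gpol_ustar_ne_zero n l m hnl hlm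
    have hqne : q ≠ 0 := fun h => hq1 (by simp [h])
    have hfin : {x : ℝ | q.IsRoot x}.Finite := Polynomial.finite_setOf_isRoot hqne
    have hpos : 0 < r / (‖dd‖ + 1) := by positivity
    obtain ⟨s, hs⟩ := ((Set.Ioo_infinite hpos).diff hfin).nonempty
    obtain ⟨⟨hs0, hsr⟩, hsroot⟩ := hs
    refine ⟨u₀ + s • dd, ?_, ?_⟩
    · rw [Metric.mem_ball, dist_self_add_left, norm_smul]
      have hnd : ‖dd‖ ≥ 0 := norm_nonneg dd
      have : |s| = s := abs_of_pos hs0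
      rw [Real.norm_eq_abs, this]
      calc s * ‖dd‖ ≤ s * (‖dd‖ + 1) := by nlinarith
        _ < r / (‖dd‖ + 1) * (‖dd‖ + 1) := by
            apply mul_lt_mul_of_pos_right hsr
            positivity
        _ = r := by field_simp
    · simp only [Set.mem_preimage, Set.mem_compl_iff, Set.mem_singleton_iff]
      have hpt : (u₀ + s • dd) = fun i j => u₀ i j + dd i j * s := by
        funext i j
        simp [mul_comm]
      rw [hpt]
      rw [← heval s]
      simpa using fun h => hsroot h
end

section
/- Let n > l ≥ 2m and fix an integer α with 2 ≤ α ≤ n-l+1. Define u_i ∈ ℝ^n (1 ≤ i ≤ m) by setting the j-th coordinate of u_i equal to 1 if j = i or j = α+l-i, and 0 otherwise. Then the 2m vectors u_1|_1^l, u_1|_α^{α+l-1}, …, u_m|_1^l, u_m|_α^{α+l-1} are linearly independent in ℝ^l. -/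
lemma pick_sum {m : ℕ} (g : Fin m → ℝ) (c : ℕ → Prop) [DecidablePred c] (t : ℕ)
    (hc : ∀ j : Fin m, c j ↔ (j : ℕ) = t) :
    ∑ j : Fin m, g j * (if c (j : ℕ) then (1:ℝ) else 0) =
      if h : t < m then g ⟨t, h⟩ else 0 := by
  split
  · next h =>
    rw [Finset.sum_eq_single (⟨t, h⟩ : Fin m)]
    · rw [if_pos ((hc _).2 rfl), mul_one]
    · intro j _ hj
      rw [if_neg, mul_zero]
      intro hcj
      exact hj (Fin.ext ((hc j).1 hcj))
    · simp
  · next h =>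
    apply Finset.sum_eq_zero
    intro j _
    rw [if_neg, mul_zero]
    intro hcj
    exact h (((hc j).1 hcj) ▸ j.isLt)

/-- For n > l ≥ 2m and 2 ≤ α ≤ n-l+1, the explicit vectors u_i ∈ ℝ^n
(1 ≤ i ≤ m) whose j-th coordinate (1-indexed) is 1 exactly when j = i or j = α+l-i,
and 0 otherwise, have the property that the 2m windows
u_1|_1^l, u_1|_α^{α+l-1}, …, u_m|_1^l, u_m|_α^{α+l-1} are linearly independent in ℝ^l. -/
theorem stmt6 (n l m : ℕ) (hnl : n > l) (hlm : l ≥ 2 * m)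
    (α : ℕ) (hα1 : 2 ≤ α) (hα2 : α ≤ n - l + 1)
    (u : Fin m → Fin n → ℝ)
    (hu : ∀ i : Fin m, ∀ j : Fin n,
      u i j = if (j : ℕ) + 1 = (i : ℕ) + 1 ∨ (j : ℕ) + 1 = α + l - ((i : ℕ) + 1)
        then (1:ℝ) else 0) :
    LinearIndependent ℝ (fun p : Fin m × Bool =>
      if p.2 then window n l α (u p.1) else window n l 1 (u p.1)) := by
  rw [Fintype.linearIndependent_iff]
  intro g hg p
  have hwin1 : ∀ (i : Fin m) (k : Fin l), window n l 1 (u i) k =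
      (if (k : ℕ) + 1 = (i : ℕ) + 1 ∨ (k : ℕ) + 1 = α + l - ((i : ℕ) + 1)
        then (1:ℝ) else 0) := by
    intro i k
    have hkl := k.isLt
    have h1 : 1 - 1 + (k : ℕ) < n := by omega
    simp only [window, dif_pos h1, hu]
    norm_num
  have hwinα : ∀ (i : Fin m) (k : Fin l), window n l α (u i) k =
      (if α + (k : ℕ) = (i : ℕ) + 1 ∨ α + (k : ℕ) = α + l - ((i : ℕ) + 1)
        then (1:ℝ) else 0) := by
    intro i k
    have hkl := k.isLt
    have h1 : α - 1 + (k : ℕ) < n := by omega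
    simp only [window, dif_pos h1, hu]
    have h2 : α - 1 + (k : ℕ) + 1 = α + (k : ℕ) := by omega
    rw [h2]
  have hk : ∀ k : Fin l, (∑ i : Fin m,
      (g (i, false) * (if (k : ℕ) + 1 = (i : ℕ) + 1 ∨ (k : ℕ) + 1 = α + l - ((i : ℕ) + 1)
          then (1:ℝ) else 0)
       + g (i, true) * (if α + (k : ℕ) = (i : ℕ) + 1 ∨ α + (k : ℕ) = α + l - ((i : ℕ) + 1)
          then (1:ℝ) else 0))) = 0 := by
    intro k
    have h0 := congrFun hg k
    simp only [Finset.sum_apply, Pi.smul_apply, smul_eq_mul, ite_apply, Pi.zero_apply] at h0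
    rw [Fintype.sum_prod_type] at h0
    refine Eq.trans ?_ h0
    apply Finset.sum_congr rfl
    intro i _
    rw [Fintype.sum_bool]
    simp only [hwin1, hwinα, if_true, Bool.false_eq_true, if_false]
    exact add_comm _ _
  set G : ℕ → Bool → ℝ := fun x b => if h : x < m then g (⟨x, h⟩, b) else 0 with hGdef
  have claimF : ∀ i, i < m → G i false + G (α + i - 1) true = 0 := by
    intro i hi
    have hil : i < l := by omega
    have h0 := hk ⟨i, hil⟩
    simp only [Fin.val_mk] at h0
    rw [Finset.sum_add_distrib] at h0
    rw [pick_sum (fun j => g (j, false)) (fun t => i + 1 = t + 1 ∨ i + 1 = α + l - (t + 1)) i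
      (by intro j; have := j.isLt; constructor
          · rintro (h | h) <;> omega
          · intro h; left; omega)] at h0
    rw [pick_sum (fun j => g (j, true)) (fun t => α + i = t + 1 ∨ α + i = α + l - (t + 1)) (α + i - 1)
      (by intro j; have := j.isLt; constructor
          · rintro (h | h) <;> omega
          · intro h; left; omega)] at h0
    simp only [hGdef]
    exact h0
  have claimT : ∀ i, i < m → G i true + G (α + i - 1) false = 0 := by
    intro i hi
    have hil : l - 1 - i < l := by omega
    have h0 := hk ⟨l - 1 - i, hil⟩
    simp only [Fin.val_mk] at h0
    rw [Finset.sum_add_distrib] at h0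
    rw [pick_sum (fun j => g (j, false)) (fun t => l - 1 - i + 1 = t + 1 ∨ l - 1 - i + 1 = α + l - (t + 1)) (α + i - 1)
      (by intro j; have := j.isLt; constructor
          · rintro (h | h) <;> omega
          · intro h; right; omega)] at h0
    rw [pick_sum (fun j => g (j, true)) (fun t => α + (l - 1 - i) = t + 1 ∨ α + (l - 1 - i) = α + l - (t + 1)) i
      (by intro j; have := j.isLt; constructor
          · rintro (h | h) <;> omega
          · intro h; right; omega)] at h0
    simp only [hGdef]
    linarith
  have main : ∀ d i b, m - i ≤ d → G i b = 0 := by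
    intro d
    induction d with
    | zero =>
      intro i b h
      have hi : ¬ i < m := by omega
      simp [hGdef, hi]
    | succ d ih =>
      intro i b h
      by_cases hi : i < m
      · have h3 : G (α + i - 1) true = 0 := ih _ _ (by omega)
        have h4 : G (α + i - 1) false = 0 := ih _ _ (by omega)
        cases b
        · have := claimF i hi; linarith
        · have := claimT i hi; linarith
      · simp [hGdef, hi]
  have := main m p.1 p.2 (by omega)
  have hp : G (p.1 : ℕ) p.2 = g p := by
    simp [hGdef, p.1.isLt]
  rw [hp] at this
  exact this
end

section
/- Let X be a compact metric space, a > 0, and f : X → L[0,a] continuous, and suppose there is 0 < τ < 1 with |f(x)(s)-f(x)(t)| ≤ τ|s-t| for all x ∈ X and s,t ∈ [0,a]. Then for every δ > 0 there exists a continuous g : X → L[0,a] with (1) sup_{x∈X} ‖f(x)-g(x)‖_∞ < δ, (2) g(x)(0)=f(x)(0) and g(x)(a)=f(x)(a) for all x, and (3) g(x) is a non-constant function for every x ∈ X. -/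
open Set

/-- L[0,a]: the 1-Lipschitz maps [0,a] → [0,1], as a subset of C([0,a], ℝ) with the
sup-metric. -/
def La (a : ℝ) : Set C(Set.Icc (0:ℝ) a, ℝ) :=
  {φ | LipschitzWith 1 φ ∧ ∀ t, φ t ∈ Set.Icc (0:ℝ) 1}

/-- Helper: 1-Lipschitz criterion on `Icc 0 a`. -/
lemma stmt8_lipIcc {a : ℝ} {u : Set.Icc (0:ℝ) a → ℝ}
    (h : ∀ s t : Set.Icc (0:ℝ) a, |u s - u t| ≤ |(s:ℝ) - t|) : LipschitzWith 1 u :=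
  LipschitzWith.mk_one fun s t => by simpa [Subtype.dist_eq, Real.dist_eq] using h s t

/-- If X is a compact metric space and f : X → L[0,a] is continuous with
a uniform Lipschitz bound τ < 1 (in the time variable), then for every δ > 0 there is a
continuous g : X → L[0,a] that is δ-close to f, agrees with f at the endpoints 0 and a,
and avoids the constant functions: g(x) is non-constant for every x. -/
theorem stmt8 (X : Type*) [MetricSpace X] [CompactSpace X]
    (a : ℝ) (ha : 0 < a)
    (f : C(X, C(Set.Icc (0:ℝ) a, ℝ))) (hfL : ∀ x, f x ∈ La a)
    (τ : ℝ) (hτ0 : 0 < τ) (hτ1 : τ < 1)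
    (hτ : ∀ (x : X) (s t : Set.Icc (0:ℝ) a), |f x s - f x t| ≤ τ * |(s:ℝ) - (t:ℝ)|)
    (δ : ℝ) (hδ : 0 < δ) :
    ∃ g : C(X, C(Set.Icc (0:ℝ) a, ℝ)),
      (∀ x, g x ∈ La a) ∧
      (∀ (x : X) (t : Set.Icc (0:ℝ) a), |f x t - g x t| < δ) ∧
      (∀ x : X, g x ⟨0, Set.left_mem_Icc.2 ha.le⟩ = f x ⟨0, Set.left_mem_Icc.2 ha.le⟩ ∧
        g x ⟨a, Set.right_mem_Icc.2 ha.le⟩ = f x ⟨a, Set.right_mem_Icc.2 ha.le⟩) ∧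
      (∀ x : X, ¬ ∃ c : ℝ, ∀ t, g x t = c) := by
  classical
  set m : ℝ := a / 2 with hmdef
  have hm0 : 0 < m := by positivity
  have hma : m < a := by rw [hmdef]; linarith
  set ε : ℝ := δ / 2 with hεdef
  have hε0 : 0 < ε := by positivity
  have hεδ : ε < δ := by rw [hεdef]; linarith
  have h0mem : (0:ℝ) ∈ Icc (0:ℝ) a := left_mem_Icc.2 ha.le
  have hamem : a ∈ Icc (0:ℝ) a := right_mem_Icc.2 ha.le
  have hmmem : m ∈ Icc (0:ℝ) a := ⟨hm0.le, hma.le⟩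
  set t0 : Icc (0:ℝ) a := ⟨0, h0mem⟩ with ht0def
  set ta : Icc (0:ℝ) a := ⟨a, hamem⟩ with htadef
  set tm : Icc (0:ℝ) a := ⟨m, hmmem⟩ with htmdef
  -- Lipschitz facts for f
  have hτ' : ∀ (x : X) (s t : Icc (0:ℝ) a), f x s - f x t ≤ τ * |(s:ℝ) - t| :=
    fun x s t => (le_abs_self _).trans (hτ x s t)
  have key : ∀ (x : X) (s t : Icc (0:ℝ) a), f x s - f x t ≤ |(s:ℝ) - t| := by
    intro x s t
    have h1 := hτ' x s t
    nlinarith [abs_nonneg ((s:ℝ) - t)]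
  have keyabs : ∀ (x : X) (s t : Icc (0:ℝ) a), |f x s - f x t| ≤ |(s:ℝ) - t| := by
    intro x s t
    rw [abs_sub_le_iff]
    refine ⟨key x s t, ?_⟩
    have h := key x t s
    rwa [abs_sub_comm] at h
  have hub : ∀ (x : X) t, f x t ≤ 1 := fun x t => ((hfL x).2 t).2
  have hlb : ∀ (x : X) t, 0 ≤ f x t := fun x t => ((hfL x).2 t).1
  -- the valley Q and the tent P
  set Q : X → Icc (0:ℝ) a → ℝ := fun x t =>
    max (max (f x tm - |(t:ℝ) - m|) (f x ta - (a - (t:ℝ)))) (max (f x t - ε) 0) with hQdef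
  set P : X → Icc (0:ℝ) a → ℝ := fun x t =>
    min (min (f x t0 + (t:ℝ)) (f x tm + (m - (t:ℝ)))) (min (f x t + ε) 1) with hPdef
  -- continuity
  have hfc : Continuous fun p : X × Icc (0:ℝ) a => f p.1 p.2 := f.uncurry.continuous
  have hev : ∀ u : Icc (0:ℝ) a, Continuous fun x : X => f x u := by
    intro u
    exact (continuous_eval_const u).comp f.continuous
  have hcoe : Continuous fun p : X × Icc (0:ℝ) a => ((p.2 : ℝ)) :=
    continuous_subtype_val.comp continuous_snd
  have hGc : Continuous fun p : X × Icc (0:ℝ) a => max (Q p.1 p.2) (P p.1 p.2) := by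
    simp only [hQdef, hPdef]
    apply Continuous.max
    · apply Continuous.max
      · apply Continuous.max
        · exact (((hev tm).comp continuous_fst).sub (hcoe.sub continuous_const).abs)
        · exact (((hev ta).comp continuous_fst).sub (continuous_const.sub hcoe))
      · exact (hfc.sub continuous_const).max continuous_const
    · apply Continuous.min
      · exact (((hev t0).comp continuous_fst).add hcoe).min
          ((((hev tm).comp continuous_fst)).add (continuous_const.sub hcoe))
      · exact (hfc.add continuous_const).min continuous_const
  set g : C(X, C(Icc (0:ℝ) a, ℝ)) :=
    ContinuousMap.curry ⟨fun p => max (Q p.1 p.2) (P p.1 p.2), hGc⟩ with hgdef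
  have hgapp : ∀ (x : X) (t : Icc (0:ℝ) a), g x t = max (Q x t) (P x t) := fun _ _ => rfl
  -- basic comparison facts
  have hQle : ∀ (x : X) (t : Icc (0:ℝ) a), Q x t ≤ f x t := by
    intro x t
    simp only [hQdef]
    apply max_le (max_le ?_ ?_) (max_le (by linarith [hε0]) (hlb x t))
    · have h1 := key x tm t
      have h2 : |(tm:ℝ) - (t:ℝ)| = |(t:ℝ) - m| := by
        show |m - (t:ℝ)| = _
        rw [abs_sub_comm]
      rw [h2] at h1; linarith
    · have h1 := key x ta t
      have h2 : |(ta:ℝ) - (t:ℝ)| = a - (t:ℝ) := by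
        show |a - (t:ℝ)| = _
        rw [abs_of_nonneg (by linarith [t.2.2])]
      rw [h2] at h1; linarith
  have hPle1 : ∀ (x : X) (t : Icc (0:ℝ) a), P x t ≤ 1 := by
    intro x t; simp only [hPdef]; exact (min_le_right _ _).trans (min_le_right _ _)
  have hPleε : ∀ (x : X) (t : Icc (0:ℝ) a), P x t ≤ f x t + ε := by
    intro x t; simp only [hPdef]; exact (min_le_right _ _).trans (min_le_left _ _)
  have hQgeε : ∀ (x : X) (t : Icc (0:ℝ) a), f x t - ε ≤ Q x t := by
    intro x t; simp only [hQdef]; exact (le_max_left _ _).trans (le_max_right _ _)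
  have hQge0 : ∀ (x : X) (t : Icc (0:ℝ) a), (0:ℝ) ≤ Q x t := by
    intro x t; simp only [hQdef]; exact (le_max_right _ _).trans (le_max_right _ _)
  -- endpoint values
  have hend0 : ∀ x : X, g x t0 = f x t0 := by
    intro x
    rw [hgapp]
    have hP : P x t0 = f x t0 := by
      apply le_antisymm
      · have h1 : P x t0 ≤ f x t0 + ((t0:ℝ)) := by
          simp only [hPdef]; exact (min_le_left _ _).trans (min_le_left _ _)
        have h2 : f x t0 + ((t0:ℝ)) = f x t0 := by
          show f x t0 + 0 = f x t0; ring
        rw [h2] at h1; exact h1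
      · simp only [hPdef]
        have h1 := key x t0 tm
        have h2 : |(t0:ℝ) - (tm:ℝ)| = m := by
          show |0 - m| = m
          rw [zero_sub, abs_neg, abs_of_nonneg hm0.le]
        rw [h2] at h1
        refine le_min (le_min ?_ ?_) (le_min (by linarith [hε0]) (hub x t0))
        · show f x t0 ≤ f x t0 + 0; linarith
        · show f x t0 ≤ f x tm + (m - 0); linarith
    rw [hP]
    exact max_eq_right ((hQle x t0))
  have henda : ∀ x : X, g x ta = f x ta := by
    intro x
    rw [hgapp]
    have hQ : Q x ta = f x ta := by
      apply le_antisymm (hQle x ta)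
      simp only [hQdef]
      refine le_trans ?_ (le_max_left _ _)
      refine le_trans ?_ (le_max_right _ _)
      show f x ta ≤ f x ta - (a - a); linarith
    have hPle : P x ta ≤ f x ta := by
      simp only [hPdef]
      refine le_trans ((min_le_left _ _).trans (min_le_right _ _)) ?_
      have h1 := key x tm ta
      have h2 : |(tm:ℝ) - (ta:ℝ)| = a - m := by
        show |m - a| = a - m
        rw [abs_of_nonpos (by linarith)]; ring
      rw [h2] at h1
      show f x tm + (m - a) ≤ f x ta; linarith
    rw [hQ]
    exact max_eq_left hPle
  have hendm : ∀ x : X, g x tm = f x tm := by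
    intro x
    rw [hgapp]
    have hQ : Q x tm = f x tm := by
      apply le_antisymm (hQle x tm)
      simp only [hQdef]
      refine le_trans ?_ (le_max_left _ _)
      refine le_trans ?_ (le_max_left _ _)
      have h2 : |(tm:ℝ) - m| = 0 := by
        show |m - m| = 0; simp
      rw [h2]; linarith
    have hPge : f x tm ≤ P x tm := by
      simp only [hPdef]
      have h1 := key x tm t0
      have h2 : |(tm:ℝ) - (t0:ℝ)| = m := by
        show |m - 0| = m
        rw [sub_zero, abs_of_nonneg hm0.le]
      rw [h2] at h1
      refine le_min (le_min ?_ ?_) (le_min (by linarith [hε0]) (hub x tm))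
      · show f x tm ≤ f x t0 + m; linarith
      · show f x tm ≤ f x tm + (m - m); linarith
    have hPle : P x tm ≤ f x tm := by
      simp only [hPdef]
      refine le_trans ((min_le_left _ _).trans (min_le_right _ _)) ?_
      show f x tm + (m - m) ≤ f x tm; linarith
    rw [hQ, le_antisymm hPle hPge]
    exact max_self _
  refine ⟨g, ?_, ?_, ?_, ?_⟩
  · -- membership in La a
    intro x
    constructor
    · -- 1-Lipschitz
      have l1 : LipschitzWith 1 fun t : Icc (0:ℝ) a => f x tm - |(t:ℝ) - m| := by
        apply stmt8_lipIcc; intro s t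
        have h2 : f x tm - |(s:ℝ) - m| - (f x tm - |(t:ℝ) - m|)
            = |(t:ℝ) - m| - |(s:ℝ) - m| := by ring
        rw [h2]
        refine le_trans (abs_abs_sub_abs_le_abs_sub _ _) ?_
        rw [show ((t:ℝ) - m) - ((s:ℝ) - m) = (t:ℝ) - (s:ℝ) from by ring,
          abs_sub_comm]
      have l2 : LipschitzWith 1 fun t : Icc (0:ℝ) a => f x ta - (a - (t:ℝ)) := by
        apply stmt8_lipIcc; intro s t
        rw [show f x ta - (a - (s:ℝ)) - (f x ta - (a - (t:ℝ))) = (s:ℝ) - t from by ring]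
      have l3 : LipschitzWith 1 fun t : Icc (0:ℝ) a => f x t - ε := by
        apply stmt8_lipIcc; intro s t
        rw [show f x s - ε - (f x t - ε) = f x s - f x t from by ring]
        exact keyabs x s t
      have l4 : LipschitzWith 1 fun _ : Icc (0:ℝ) a => (0:ℝ) := by
        apply stmt8_lipIcc; intro s t; simpa using abs_nonneg ((s:ℝ) - t)
      have l5 : LipschitzWith 1 fun t : Icc (0:ℝ) a => f x t0 + (t:ℝ) := by
        apply stmt8_lipIcc; intro s t
        rw [show f x t0 + (s:ℝ) - (f x t0 + (t:ℝ)) = (s:ℝ) - t from by ring]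
      have l6 : LipschitzWith 1 fun t : Icc (0:ℝ) a => f x tm + (m - (t:ℝ)) := by
        apply stmt8_lipIcc; intro s t
        rw [show f x tm + (m - (s:ℝ)) - (f x tm + (m - (t:ℝ))) = -((s:ℝ) - t) from by ring,
          abs_neg]
      have l7 : LipschitzWith 1 fun t : Icc (0:ℝ) a => f x t + ε := by
        apply stmt8_lipIcc; intro s t
        rw [show f x s + ε - (f x t + ε) = f x s - f x t from by ring]
        exact keyabs x s t
      have l8 : LipschitzWith 1 fun _ : Icc (0:ℝ) a => (1:ℝ) := by
        apply stmt8_lipIcc; intro s t; simpa using abs_nonneg ((s:ℝ) - t)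
      have hL : LipschitzWith 1 fun t : Icc (0:ℝ) a => max (Q x t) (P x t) := by
        have h := (((l1.max l2).max (l3.max l4)).max ((l5.min l6).min (l7.min l8)))
        simp only [hQdef, hPdef]
        simpa using h
      exact hL
    · intro t
      rw [hgapp]
      constructor
      · exact le_trans (hQge0 x t) (le_max_left _ _)
      · exact max_le ((hQle x t).trans (hub x t)) (hPle1 x t)
  · -- closeness
    intro x t
    rw [hgapp]
    have h1 : f x t - ε ≤ max (Q x t) (P x t) := (hQgeε x t).trans (le_max_left _ _)
    have h2 : max (Q x t) (P x t) ≤ f x t + ε :=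
      max_le ((hQle x t).trans (by linarith [hε0])) (hPleε x t)
    rw [abs_sub_lt_iff]
    constructor <;> linarith
  · -- endpoints
    intro x
    exact ⟨hend0 x, henda x⟩
  · -- nonconstancy
    rintro x ⟨c, hc⟩
    have hc0 : f x t0 = c := by rw [← hend0 x]; exact hc t0
    have hca : f x ta = c := by rw [← henda x]; exact hc ta
    have hcm : f x tm = c := by rw [← hendm x]; exact hc tm
    -- choose t1
    set t1 : ℝ := min (m / 2) (ε / (2 * τ)) with ht1def
    have ht1pos : 0 < t1 := lt_min (by linarith) (by positivity)
    have ht1m : t1 < m := (min_le_left _ _).trans_lt (by linarith)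
    have hτt1 : τ * t1 < ε := by
      have h1 : t1 ≤ ε / (2 * τ) := min_le_right _ _
      have h2 : τ * t1 ≤ τ * (ε / (2 * τ)) := by nlinarith
      have h3 : τ * (ε / (2 * τ)) = ε / 2 := by field_simp
      linarith
    have ht1mem : t1 ∈ Icc (0:ℝ) a := ⟨ht1pos.le, by linarith⟩
    have ht2mem : m + t1 ∈ Icc (0:ℝ) a := ⟨by linarith, by rw [hmdef] at ht1m ⊢; linarith⟩
    set s1 : Icc (0:ℝ) a := ⟨t1, ht1mem⟩ with hs1def
    set s2 : Icc (0:ℝ) a := ⟨m + t1, ht2mem⟩ with hs2def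
    -- Step 1: c ≥ 1
    have hc1 : 1 ≤ c := by
      have hPc : P x s1 ≤ c := by
        rw [← hc s1, hgapp]; exact le_max_right _ _
      by_contra hlt
      push_neg at hlt
      have hA : c < f x t0 + (s1:ℝ) := by
        rw [hc0]; show c < c + t1; linarith
      have hB : c < f x tm + (m - (s1:ℝ)) := by
        rw [hcm]; show c < c + (m - t1); linarith
      have hC : c < f x s1 + ε := by
        have h1 := hτ' x t0 s1
        have h2 : |(t0:ℝ) - (s1:ℝ)| = t1 := by
          show |0 - t1| = t1
          rw [zero_sub, abs_neg, abs_of_nonneg ht1pos.le]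
        rw [h2, hc0] at h1
        nlinarith
      have hcP : c < P x s1 := by
        simp only [hPdef]
        exact lt_min (lt_min hA hB) (lt_min hC hlt)
      linarith
    -- Step 2: contradiction at s2
    have hPlt : P x s2 < c := by
      have h1 : P x s2 ≤ f x tm + (m - (s2:ℝ)) := by
        simp only [hPdef]; exact (min_le_left _ _).trans (min_le_right _ _)
      have h2 : f x tm + (m - (s2:ℝ)) < c := by
        rw [hcm]; show c + (m - (m + t1)) < c; linarith
      linarith
    have hQlt : Q x s2 < c := by
      have q1 : f x tm - |(s2:ℝ) - m| < c := by
        rw [hcm]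
        show c - |m + t1 - m| < c
        rw [show m + t1 - m = t1 from by ring, abs_of_nonneg ht1pos.le]
        linarith
      have q2 : f x ta - (a - (s2:ℝ)) < c := by
        rw [hca]
        show c - (a - (m + t1)) < c
        have h3 : a - (m + t1) = m - t1 := by rw [hmdef]; ring
        rw [h3]; linarith
      have q3 : f x s2 - ε < c := by
        have := hub x s2; linarith
      have q4 : (0:ℝ) < c := by linarith
      simp only [hQdef]
      exact max_lt (max_lt q1 q2) (max_lt q3 q4)
    have hfin : g x s2 < c := by
      rw [hgapp]; exact max_lt hQlt hPlt
    rw [hc s2] at hfin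
    exact lt_irrefl c hfin
end

section
/- Let X be a compact metric space, a > 0, and f : X → L[0,a] continuous with |f(x)(s)-f(x)(t)| ≤ τ|s-t| for some 0 < τ < 1 and all x,s,t. Then for every δ > 0 there exists a continuous g : X → L[0,a] such that: (1) sup_x ‖f(x)-g(x)‖_∞ < δ; (2) g(x)(0)=f(x)(0) and g(x)(a)=f(x)(a) for all x; and (3) whenever x,y ∈ X and 0 ≤ ε ≤ a/2 satisfy g(x)(t+ε) = g(y)(t) for all t ∈ [0, a-ε], it follows that ε = 0 and d(x,y) < δ. -/
open Set

open Finset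

namespace Stmt9Aux

/-- tooth function: tent of height `l`, peak at `p`, slopes ±1. -/
noncomputable def tf (l p t : ℝ) : ℝ := max 0 (l - |t - p|)

/-- time reparametrization: 0 on `[0, (6N+8)m]`, then linear up to `a`, constant `a`
on `[a-8m, a]`. -/
noncomputable def sg (a m : ℝ) (N : ℕ) (t : ℝ) : ℝ :=
  min a (max 0 ((a / (a - (6*N+16)*m)) * (t - (6*N+8)*m)))

/-- the perturbed function. -/
noncomputable def G0 (a m : ℝ) (N : ℕ) (F : ℝ → ℝ) (L : ℕ → ℝ) (t : ℝ) : ℝ :=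
  (1 - 2*m) * F (sg a m N t)
  + (2*m) * F 0 * max 0 (1 - t/(8*m))
  + (2*m) * F a * max 0 (1 - (a-t)/(8*m))
  + ∑ j ∈ Finset.range N, tf (L j) ((6*j+9)*m + L j) t

structure Params (a τ m : ℝ) (N : ℕ) (F : ℝ → ℝ) (L : ℕ → ℝ) : Prop where
  hm : 0 < m
  hm4 : m ≤ 1/4
  hN : 0 < N
  ha : 0 < a
  ht0 : 0 ≤ τ
  ht1 : τ < 1
  hMa : (6*N+16)*m ≤ a*(1-τ)/8
  hF : ∀ v w, |F v - F w| ≤ τ * |v - w|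
  hF0 : ∀ v, 0 ≤ F v
  hF1 : ∀ v, F v ≤ 1
  hL : ∀ j < N, m*(1 + j/(4*N)) ≤ L j ∧ L j ≤ m*(1 + j/(4*N)) + m/(8*N)

noncomputable def gam (τ : ℝ) : ℝ := max (1/2) (8*τ/(7+τ))

section Basic

variable {a τ m : ℝ} {N : ℕ} {F : ℝ → ℝ} {L : ℕ → ℝ}

lemma gam_half (τ : ℝ) : (1/2 : ℝ) ≤ gam τ := le_max_left _ _

lemma gam_nonneg (τ : ℝ) : (0:ℝ) ≤ gam τ := le_trans (by norm_num) (gam_half τ)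

lemma gam_lt_one (ht0 : 0 ≤ τ) (ht1 : τ < 1) : gam τ < 1 := by
  apply max_lt (by norm_num)
  rw [div_lt_one (by linarith)]
  linarith

lemma gam_ge (ht0 : 0 ≤ τ) : 8*τ/(7+τ) ≤ gam τ := le_max_right _ _

lemma Params.hMa8 (P : Params a τ m N F L) : (6*N+16)*m ≤ a/8 := by
  have := P.hMa; nlinarith [P.ha, P.ht0]

lemma Params.hden (P : Params a τ m N F L) : 0 < a - (6*N+16)*m := by
  have := P.hMa8; linarith [P.ha]

lemma Params.hs1 (P : Params a τ m N F L) : 1 ≤ a / (a - (6*N+16)*m) := by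
  rw [le_div_iff₀ P.hden]
  nlinarith [P.hm, (by positivity : (0:ℝ) ≤ (6*(N:ℝ)+16))]

lemma Params.hs0 (P : Params a τ m N F L) : 0 ≤ a / (a - (6*N+16)*m) :=
  le_trans (by norm_num) P.hs1

lemma Params.hsτ (P : Params a τ m N F L) :
    τ * (a / (a - (6*N+16)*m)) ≤ gam τ := by
  refine le_trans ?_ (gam_ge P.ht0)
  rw [mul_div_assoc'] at *
  rw [div_le_div_iff₀ P.hden (by linarith [P.ht0] : (0:ℝ) < 7 + τ)]
  have := P.hMa
  nlinarith [P.ht0]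

lemma Params.hL1 (P : Params a τ m N F L) {j : ℕ} (hj : j < N) : m ≤ L j := by
  refine le_trans ?_ (P.hL j hj).1
  nlinarith [P.hm, (by positivity : (0:ℝ) ≤ (j:ℝ)/(4*N))]

lemma Params.hL2 (P : Params a τ m N F L) {j : ℕ} (hj : j < N) : L j ≤ 2*m := by
  refine le_trans (P.hL j hj).2 ?_
  have hNp : (0:ℝ) < N := by exact_mod_cast P.hN
  have hjN : (j:ℝ) ≤ N := by exact_mod_cast hj.le
  have h1 : (j:ℝ)/(4*N) ≤ 1/4 := by
    rw [div_le_div_iff₀ (by linarith) (by norm_num)]; linarith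
  have hN1 : (1:ℝ) ≤ N := by exact_mod_cast P.hN
  have h2 : m/(8*N) ≤ m/8 := by
    apply div_le_div_of_nonneg_left P.hm.le (by norm_num)
    · linarith
  nlinarith [P.hm]

lemma Params.hL0 (P : Params a τ m N F L) {j : ℕ} (hj : j < N) : 0 < L j :=
  lt_of_lt_of_le P.hm (P.hL1 hj)

end Basic


section Tooth

lemma lip_max (c x y : ℝ) : |max c x - max c y| ≤ |x - y| := by
  have h := abs_max_sub_max_le_abs x y c
  rwa [max_comm x c, max_comm y c] at h

lemma lip_min (c x y : ℝ) : |min c x - min c y| ≤ |x - y| := by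
  have h := abs_max_sub_max_le_abs (-x) (-y) (-c)
  rw [max_comm (-x) (-c), max_comm (-y) (-c), max_neg_neg, max_neg_neg] at h
  have e1 : -min c x - -min c y = -(min c x - min c y) := by ring
  have e2 : -x - -y = -(x - y) := by ring
  rw [e1, e2, abs_neg, abs_neg] at h
  exact h

lemma tf_nonneg (l p t : ℝ) : 0 ≤ tf l p t := le_max_left _ _

lemma tf_le {l : ℝ} (hl : 0 ≤ l) (p t : ℝ) : tf l p t ≤ l :=
  max_le hl (by linarith [abs_nonneg (t - p)])

lemma tf_zero_left {l p t : ℝ} (hl : 0 ≤ l) (ht : t ≤ p - l) : tf l p t = 0 := by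
  apply max_eq_left
  have h : p - t ≤ |t - p| := by rw [abs_sub_comm]; exact le_abs_self _
  linarith

lemma tf_zero_right {l p t : ℝ} (hl : 0 ≤ l) (ht : p + l ≤ t) : tf l p t = 0 := by
  apply max_eq_left
  have h : t - p ≤ |t - p| := le_abs_self _
  linarith

lemma tf_rise {l p t : ℝ} (h1 : p - l ≤ t) (h2 : t ≤ p) : tf l p t = t - (p - l) := by
  have h : |t - p| = p - t := by rw [abs_sub_comm]; exact abs_of_nonneg (by linarith)
  rw [tf, h, max_eq_right (by linarith : (0:ℝ) ≤ l - (p - t))]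
  ring

lemma tf_anti {l p t t' : ℝ} (hp : p ≤ t) (htt : t ≤ t') : tf l p t' ≤ tf l p t := by
  have h1 : |t - p| = t - p := abs_of_nonneg (by linarith)
  have h2 : |t' - p| = t' - p := abs_of_nonneg (by linarith)
  rw [tf, tf, h1, h2]
  exact max_le_max le_rfl (by linarith)

lemma tf_lip (l p t t' : ℝ) : |tf l p t - tf l p t'| ≤ |t - t'| := by
  refine le_trans (lip_max 0 _ _) ?_
  have : (l - |t - p|) - (l - |t' - p|) = |t' - p| - |t - p| := by ring
  rw [this]
  refine le_trans (abs_abs_sub_abs_le_abs_sub _ _) ?_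
  have : t' - p - (t - p) = -(t - t') := by ring
  rw [this, abs_neg]

end Tooth

section Sg

variable {a τ m : ℝ} {N : ℕ} {F : ℝ → ℝ} {L : ℕ → ℝ}

lemma sg_nonneg (P : Params a τ m N F L) (t : ℝ) : 0 ≤ sg a m N t :=
  le_min P.ha.le (le_max_left _ _)

lemma sg_le_a (P : Params a τ m N F L) (t : ℝ) : sg a m N t ≤ a := min_le_left _ _

lemma sg_zero (P : Params a τ m N F L) {t : ℝ} (ht : t ≤ (6*N+8)*m) : sg a m N t = 0 := by
  rw [sg]
  have h1 : (a / (a - (6*N+16)*m)) * (t - (6*N+8)*m) ≤ 0 :=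
    mul_nonpos_of_nonneg_of_nonpos P.hs0 (by linarith)
  rw [max_eq_left h1, min_eq_right P.ha.le]

lemma sg_eq_a (P : Params a τ m N F L) {t : ℝ} (ht : a - 8*m ≤ t) : sg a m N t = a := by
  rw [sg]
  have hd := P.hden
  have key : a ≤ (a / (a - (6*N+16)*m)) * (t - (6*N+8)*m) := by
    have h2 : a - (6*N+16)*m ≤ t - (6*N+8)*m := by
      have : (6*(N:ℝ)+16)*m = (6*N+8)*m + 8*m := by ring
      linarith
    calc a = (a / (a - (6*N+16)*m)) * (a - (6*N+16)*m) := by field_simp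
      _ ≤ _ := mul_le_mul_of_nonneg_left h2 P.hs0
  rw [max_eq_right (le_trans P.ha.le key), min_eq_left key]

lemma sg_lip (P : Params a τ m N F L) (t t' : ℝ) :
    |sg a m N t - sg a m N t'| ≤ (a / (a - (6*N+16)*m)) * |t - t'| := by
  rw [sg, sg]
  refine (lip_min a _ _).trans ?_
  refine (lip_max 0 _ _).trans ?_
  have e : (a / (a - (6*N+16)*m)) * (t - (6*N+8)*m)
      - (a / (a - (6*N+16)*m)) * (t' - (6*N+8)*m) = (a / (a - (6*N+16)*m)) * (t - t') := by ring
  rw [e, abs_mul, abs_of_nonneg P.hs0]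

lemma sg_close (P : Params a τ m N F L) {t : ℝ} (h0 : 0 ≤ t) (h1 : t ≤ a) :
    |sg a m N t - t| ≤ (6*N+16)*m := by
  have hm := P.hm
  have hM8 := P.hMa8
  have hMpos : (0:ℝ) < (6*N+16)*m := by positivity
  rcases le_or_gt t ((6*N+8)*m) with hc | hc
  · rw [sg_zero P hc, zero_sub, abs_neg, abs_of_nonneg h0]
    nlinarith
  rcases le_or_gt (a - 8*m) t with hc2 | hc2
  · rw [sg_eq_a P hc2, abs_of_nonneg (by linarith : (0:ℝ) ≤ a - t)]
    nlinarith
  · have hd := P.hden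
    have hs1 := P.hs1
    set s := a / (a - (6*N+16)*m) with hs
    have hval : sg a m N t = s * (t - (6*N+8)*m) := by
      rw [sg]
      have hnn : 0 ≤ s * (t - (6*N+8)*m) := mul_nonneg P.hs0 (by linarith)
      have hle : s * (t - (6*N+8)*m) ≤ a := by
        have h2 : t - (6*N+8)*m ≤ a - (6*N+16)*m := by nlinarith
        calc s * (t - (6*N+8)*m) ≤ s * (a - (6*N+16)*m) :=
              mul_le_mul_of_nonneg_left h2 P.hs0
          _ = a := by rw [hs]; exact div_mul_cancel₀ a (ne_of_gt hd)
      rw [max_eq_right hnn, min_eq_right hle]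
    rw [hval, abs_le]
    have hsa : s * (a - (6*N+16)*m) = a := by rw [hs]; exact div_mul_cancel₀ a (ne_of_gt hd)
    have hB8M : (6*(N:ℝ)+8)*m ≤ (6*N+16)*m := by nlinarith [hm.le]
    constructor
    · have hprod2 := mul_nonneg (sub_nonneg.2 hs1) (by linarith : (0:ℝ) ≤ t - (6*N+8)*m)
      nlinarith [hprod2]
    · have hprod := mul_nonneg (sub_nonneg.2 hs1) (by linarith : (0:ℝ) ≤ a - 8*m - t)
      nlinarith [hprod]

end Sg


section Regions

variable {a τ m : ℝ} {N : ℕ} {F : ℝ → ℝ} {L : ℕ → ℝ}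

lemma Params.hN1 (P : Params a τ m N F L) : (1:ℝ) ≤ N := by exact_mod_cast P.hN

lemma Params.haM (P : Params a τ m N F L) : 8*((6*N+16)*m) ≤ a := by
  have := P.hMa8; linarith

lemma Params.h16 (P : Params a τ m N F L) : 16*m ≤ (6*N+16)*m := by
  nlinarith [P.hm.le, (by positivity : (0:ℝ) ≤ (N:ℝ))]

lemma ramp0_zero (hm : 0 < m) {t : ℝ} (ht : 8*m ≤ t) : max 0 (1 - t/(8*m)) = 0 := by
  apply max_eq_left
  have : (1:ℝ) ≤ t/(8*m) := (le_div_iff₀ (by positivity)).2 (by linarith)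
  linarith

lemma rampa_zero (hm : 0 < m) {t : ℝ} (ht : t ≤ a - 8*m) : max 0 (1 - (a-t)/(8*m)) = 0 := by
  apply max_eq_left
  have : (1:ℝ) ≤ (a-t)/(8*m) := (le_div_iff₀ (by positivity)).2 (by linarith)
  linarith

lemma ts_single (P : Params a τ m N F L) {j : ℕ} (hj : j < N) {t : ℝ}
    (h1 : (6*j+8)*m ≤ t) (h2 : t ≤ (6*j+14)*m) :
    ∑ i ∈ Finset.range N, tf (L i) ((6*i+9)*m + L i) t = tf (L j) ((6*j+9)*m + L j) t := by
  apply Finset.sum_eq_single_of_mem j (Finset.mem_range.2 hj)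
  intro i hiR hne
  have hiN := Finset.mem_range.1 hiR
  have hm := P.hm
  have hLi1 := P.hL1 hiN
  have hLi2 := P.hL2 hiN
  rcases lt_or_gt_of_ne hne with hlt | hgt
  · have hij : (i:ℝ) + 1 ≤ j := by exact_mod_cast hlt
    exact tf_zero_right (by linarith) (by nlinarith)
  · have hij : (j:ℝ) + 1 ≤ i := by exact_mod_cast hgt
    exact tf_zero_left (by linarith) (by nlinarith)

lemma ts_zero_left (P : Params a τ m N F L) {t : ℝ} (ht : t ≤ 8*m) :
    ∑ i ∈ Finset.range N, tf (L i) ((6*i+9)*m + L i) t = 0 := by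
  apply Finset.sum_eq_zero
  intro i hiR
  have hiN := Finset.mem_range.1 hiR
  have hm := P.hm
  have hLi1 := P.hL1 hiN
  exact tf_zero_left (by linarith) (by nlinarith [(by positivity : (0:ℝ) ≤ (i:ℝ))])

lemma ts_zero_right (P : Params a τ m N F L) {t : ℝ} (ht : (6*N+8)*m ≤ t) :
    ∑ i ∈ Finset.range N, tf (L i) ((6*i+9)*m + L i) t = 0 := by
  apply Finset.sum_eq_zero
  intro i hiR
  have hiN := Finset.mem_range.1 hiR
  have hm := P.hm
  have hLi1 := P.hL1 hiN
  have hLi2 := P.hL2 hiN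
  have hij : (i:ℝ) + 1 ≤ N := by exact_mod_cast hiN
  exact tf_zero_right (by linarith) (by nlinarith)

lemma fR1 (P : Params a τ m N F L) {t : ℝ} (h1 : t ≤ 8*m) :
    G0 a m N F L t = (1-2*m) * F 0 + (2*m) * F 0 * max 0 (1 - t/(8*m)) := by
  have hm := P.hm
  have h16 := P.h16
  have haM := P.haM
  rw [G0, sg_zero P (by nlinarith [(by positivity : (0:ℝ) ≤ (N:ℝ))]),
    ts_zero_left P h1, rampa_zero hm (by nlinarith)]
  ring

lemma fR2 (P : Params a τ m N F L) {j : ℕ} (hj : j < N) {t : ℝ}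
    (h1 : (6*j+8)*m ≤ t) (h2 : t ≤ (6*j+14)*m) :
    G0 a m N F L t = (1-2*m) * F 0 + tf (L j) ((6*j+9)*m + L j) t := by
  have hm := P.hm
  have h16 := P.h16
  have haM := P.haM
  have hjN : (j:ℝ) + 1 ≤ N := by exact_mod_cast hj
  have hj0 : (0:ℝ) ≤ (j:ℝ) := by positivity
  rw [G0, sg_zero P (by nlinarith), ramp0_zero hm (by nlinarith),
    rampa_zero hm (by nlinarith), ts_single P hj h1 h2]
  ring

lemma fR3 (P : Params a τ m N F L) {t : ℝ} (h1 : (6*N+8)*m ≤ t) (h2 : t ≤ a - 8*m) :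
    G0 a m N F L t = (1-2*m) * F (sg a m N t) := by
  have hm := P.hm
  have hN1 := P.hN1
  rw [G0, ramp0_zero hm (by nlinarith), rampa_zero hm h2, ts_zero_right P h1]
  ring

lemma fR4 (P : Params a τ m N F L) {t : ℝ} (h1 : a - 8*m ≤ t) :
    G0 a m N F L t = (1-2*m) * F a + (2*m) * F a * max 0 (1 - (a-t)/(8*m)) := by
  have hm := P.hm
  have h16 := P.h16
  have haM := P.haM
  rw [G0, sg_eq_a P h1, ramp0_zero hm (by nlinarith), ts_zero_right P (by nlinarith)]
  ring

end Regions


section Lip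

variable {a τ m : ℝ} {N : ℕ} {F : ℝ → ℝ} {L : ℕ → ℝ}

lemma absGlue {g : ℝ → ℝ} {u v w K : ℝ}
    (h1 : ∀ t t', u ≤ t → t ≤ t' → t' ≤ v → |g t' - g t| ≤ K*(t'-t))
    (h2 : ∀ t t', v ≤ t → t ≤ t' → t' ≤ w → |g t' - g t| ≤ K*(t'-t)) :
    ∀ t t', u ≤ t → t ≤ t' → t' ≤ w → |g t' - g t| ≤ K*(t'-t) := by
  intro t t' hu htt hw
  rcases le_total t' v with hc | hc
  · exact h1 t t' hu htt hc
  rcases le_total v t with hc2 | hc2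
  · exact h2 t t' hc2 htt hw
  · calc |g t' - g t| ≤ |g t' - g v| + |g v - g t| := abs_sub_le _ _ _
      _ ≤ K*(t'-v) + K*(v-t) := add_le_add (h2 v t' le_rfl hc hw) (h1 t v hu hc2 le_rfl)
      _ = K*(t'-t) := by ring

lemma incGlue {g : ℝ → ℝ} {u v w K : ℝ}
    (h1 : ∀ t t', u ≤ t → t ≤ t' → t' ≤ v → g t' - g t ≤ K*(t'-t))
    (h2 : ∀ t t', v ≤ t → t ≤ t' → t' ≤ w → g t' - g t ≤ K*(t'-t)) :
    ∀ t t', u ≤ t → t ≤ t' → t' ≤ w → g t' - g t ≤ K*(t'-t) := by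
  intro t t' hu htt hw
  rcases le_total t' v with hc | hc
  · exact h1 t t' hu htt hc
  rcases le_total v t with hc2 | hc2
  · exact h2 t t' hc2 htt hw
  · have a1 := h2 v t' le_rfl hc hw
    have a2 := h1 t v hu hc2 le_rfl
    nlinarith

lemma lipStart (P : Params a τ m N F L) :
    ∀ t t', 0 ≤ t → t ≤ t' → t' ≤ 8*m → |G0 a m N F L t' - G0 a m N F L t| ≤ (1/4)*(t'-t) := by
  intro t t' h0 htt h8
  have hm := P.hm
  rw [fR1 P h8, fR1 P (htt.trans h8)]
  have e : (1-2*m) * F 0 + (2*m) * F 0 * max 0 (1 - t'/(8*m))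
      - ((1-2*m) * F 0 + (2*m) * F 0 * max 0 (1 - t/(8*m)))
      = (2*m*F 0) * (max 0 (1 - t'/(8*m)) - max 0 (1 - t/(8*m))) := by ring
  rw [e, abs_mul]
  have hq := lip_max 0 (1 - t'/(8*m)) (1 - t/(8*m))
  have e2 : (1 - t'/(8*m)) - (1 - t/(8*m)) = -((t'-t)/(8*m)) := by ring
  have hpos : (0:ℝ) ≤ (t'-t)/(8*m) := div_nonneg (by linarith) (by positivity)
  rw [e2, abs_neg, abs_of_nonneg hpos] at hq
  have hB : |2*m*F 0| ≤ 2*m := by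
    rw [abs_of_nonneg (by nlinarith [P.hF0 0])]
    nlinarith [P.hF1 0]
  calc |2*m*F 0| * |max 0 (1 - t'/(8*m)) - max 0 (1 - t/(8*m))|
      ≤ (2*m) * ((t'-t)/(8*m)) :=
        mul_le_mul hB hq (abs_nonneg _) (by linarith)
    _ = (1/4)*(t'-t) := by field_simp; ring

lemma lipEnd (P : Params a τ m N F L) :
    ∀ t t', a - 8*m ≤ t → t ≤ t' → t' ≤ a → |G0 a m N F L t' - G0 a m N F L t| ≤ (1/4)*(t'-t) := by
  intro t t' h0 htt h8
  have hm := P.hm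
  rw [fR4 P (h0.trans htt), fR4 P h0]
  have e : (1-2*m) * F a + (2*m) * F a * max 0 (1 - (a-t')/(8*m))
      - ((1-2*m) * F a + (2*m) * F a * max 0 (1 - (a-t)/(8*m)))
      = (2*m*F a) * (max 0 (1 - (a-t')/(8*m)) - max 0 (1 - (a-t)/(8*m))) := by ring
  rw [e, abs_mul]
  have hq := lip_max 0 (1 - (a-t')/(8*m)) (1 - (a-t)/(8*m))
  have e2 : (1 - (a-t')/(8*m)) - (1 - (a-t)/(8*m)) = (t'-t)/(8*m) := by ring
  have hpos : (0:ℝ) ≤ (t'-t)/(8*m) := div_nonneg (by linarith) (by positivity)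
  rw [e2, abs_of_nonneg hpos] at hq
  have hB : |2*m*F a| ≤ 2*m := by
    rw [abs_of_nonneg (by nlinarith [P.hF0 a])]
    nlinarith [P.hF1 a]
  calc |2*m*F a| * |max 0 (1 - (a-t')/(8*m)) - max 0 (1 - (a-t)/(8*m))|
      ≤ (2*m) * ((t'-t)/(8*m)) :=
        mul_le_mul hB hq (abs_nonneg _) (by linarith)
    _ = (1/4)*(t'-t) := by field_simp; ring

lemma lipPlateau (P : Params a τ m N F L) {j : ℕ} (hj : j < N) :
    ∀ t t', (6*j+8)*m ≤ t → t ≤ t' → t' ≤ (6*j+14)*m →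
      |G0 a m N F L t' - G0 a m N F L t| ≤ 1*(t'-t) := by
  intro t t' h0 htt h8
  rw [fR2 P hj (h0.trans htt) h8, fR2 P hj h0 (htt.trans h8)]
  have e : (1-2*m) * F 0 + tf (L j) ((6*j+9)*m + L j) t'
      - ((1-2*m) * F 0 + tf (L j) ((6*j+9)*m + L j) t)
      = tf (L j) ((6*j+9)*m + L j) t' - tf (L j) ((6*j+9)*m + L j) t := by ring
  rw [e, one_mul]
  refine (tf_lip _ _ t' t).trans ?_
  rw [abs_of_nonneg (by linarith : (0:ℝ) ≤ t' - t)]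

lemma lipMove (P : Params a τ m N F L) :
    ∀ t t', (6*N+8)*m ≤ t → t ≤ t' → t' ≤ a - 8*m →
      |G0 a m N F L t' - G0 a m N F L t| ≤ gam τ * (t'-t) := by
  intro t t' h0 htt h8
  rw [fR3 P (h0.trans htt) h8, fR3 P h0 (htt.trans h8)]
  have e : (1-2*m) * F (sg a m N t') - (1-2*m) * F (sg a m N t)
      = (1-2*m) * (F (sg a m N t') - F (sg a m N t)) := by ring
  rw [e, abs_mul, abs_of_nonneg (by linarith [P.hm4] : (0:ℝ) ≤ 1-2*m)]
  have h1 : |F (sg a m N t') - F (sg a m N t)| ≤ τ * ((a / (a - (6*N+16)*m)) * (t'-t)) := by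
    refine (P.hF _ _).trans ?_
    apply mul_le_mul_of_nonneg_left _ P.ht0
    have := sg_lip P t' t
    rwa [abs_of_nonneg (by linarith : (0:ℝ) ≤ t'-t)] at this
  calc (1-2*m) * |F (sg a m N t') - F (sg a m N t)|
      ≤ 1 * (τ * ((a / (a - (6*N+16)*m)) * (t'-t))) :=
        mul_le_mul (by linarith [P.hm]) h1 (abs_nonneg _) (by norm_num)
    _ = (τ * (a / (a - (6*N+16)*m))) * (t'-t) := by ring
    _ ≤ gam τ * (t'-t) := mul_le_mul_of_nonneg_right P.hsτ (by linarith)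

lemma lipUpTo (P : Params a τ m N F L) :
    ∀ k : ℕ, k ≤ N → ∀ t t', 0 ≤ t → t ≤ t' → t' ≤ (6*k+8)*m →
      |G0 a m N F L t' - G0 a m N F L t| ≤ 1*(t'-t) := by
  intro k
  induction k with
  | zero =>
    intro _ t t' h0 htt h8
    have h8' : t' ≤ 8*m := by push_cast at h8; linarith
    refine (lipStart P t t' h0 htt h8').trans ?_
    linarith
  | succ k ih =>
    intro hk t t' h0 htt h8
    have hkN : k < N := hk
    have e : ((6*((k:ℝ)+1)+8)*m) = (6*(k:ℝ)+14)*m := by ring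
    push_cast at h8
    rw [e] at h8
    exact absGlue (ih (le_of_lt hkN)) (lipPlateau P hkN) t t' h0 htt h8

lemma lipAll (P : Params a τ m N F L) :
    ∀ t t', 0 ≤ t → t ≤ t' → t' ≤ a →
      |G0 a m N F L t' - G0 a m N F L t| ≤ t'-t := by
  have hm := P.hm
  have haM := P.haM
  have h16 := P.h16
  have p1 := lipUpTo P N le_rfl
  have p2 : ∀ t t', (6*N+8)*m ≤ t → t ≤ t' → t' ≤ a - 8*m →
      |G0 a m N F L t' - G0 a m N F L t| ≤ 1*(t'-t) := by
    intro t t' h0 htt h8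
    refine (lipMove P t t' h0 htt h8).trans ?_
    have := gam_lt_one P.ht0 P.ht1
    nlinarith [gam_nonneg τ]
  have p3 : ∀ t t', a - 8*m ≤ t → t ≤ t' → t' ≤ a →
      |G0 a m N F L t' - G0 a m N F L t| ≤ 1*(t'-t) := by
    intro t t' h0 htt h8
    refine (lipEnd P t t' h0 htt h8).trans ?_
    linarith
  intro t t' h0 htt ha
  have := absGlue (absGlue p1 p2) p3 t t' h0 htt ha
  linarith

end Lip


section Inc

variable {a τ m : ℝ} {N : ℕ} {F : ℝ → ℝ} {L : ℕ → ℝ}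

lemma incb0 (P : Params a τ m N F L) :
    ∀ t t', 0 ≤ t → t ≤ t' → t' ≤ 9*m →
      G0 a m N F L t' - G0 a m N F L t ≤ gam τ * (t'-t) := by
  have hm := P.hm
  have hconst : ∀ u, 8*m ≤ u → u ≤ 9*m → G0 a m N F L u = (1-2*m) * F 0 := by
    intro u hu1 hu2
    have h := fR2 P P.hN (t := u) (by push_cast; linarith) (by push_cast; nlinarith)
    rw [h, tf_zero_left (by linarith [P.hL1 P.hN]) (by push_cast; nlinarith [P.hL1 P.hN])]
    ring
  have p1 : ∀ t t', 0 ≤ t → t ≤ t' → t' ≤ 8*m →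
      G0 a m N F L t' - G0 a m N F L t ≤ gam τ * (t'-t) := by
    intro t t' h0 htt h8
    have h := lipStart P t t' h0 htt h8
    have := abs_le.mp h
    nlinarith [gam_half τ]
  have p2 : ∀ t t', 8*m ≤ t → t ≤ t' → t' ≤ 9*m →
      G0 a m N F L t' - G0 a m N F L t ≤ gam τ * (t'-t) := by
    intro t t' h0 htt h8
    rw [hconst t' (h0.trans htt) h8, hconst t h0 (htt.trans h8)]
    nlinarith [gam_nonneg τ]
  exact incGlue p1 p2

lemma incbj (P : Params a τ m N F L) {j : ℕ} (hj1 : j+1 < N) :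
    ∀ t t', (6*(j:ℝ)+9)*m + L j ≤ t → t ≤ t' → t' ≤ (6*(j:ℝ)+15)*m →
      G0 a m N F L t' - G0 a m N F L t ≤ gam τ * (t'-t) := by
  have hm := P.hm
  have hjN : j < N := Nat.lt_of_succ_lt hj1
  have hL1 := P.hL1 hjN
  have hL2 := P.hL2 hjN
  have hL1' := P.hL1 hj1
  have hform : ∀ u, (6*(j:ℝ)+8)*m ≤ u → u ≤ (6*(j:ℝ)+15)*m →
      G0 a m N F L u = (1-2*m) * F 0 + tf (L j) ((6*j+9)*m + L j) u := by
    intro u hu1 hu2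
    rcases le_total u ((6*(j:ℝ)+14)*m) with hc | hc
    · exact fR2 P hjN hu1 hc
    · have h := fR2 P hj1 (t := u) (by push_cast; linarith) (by push_cast; linarith)
      rw [h, tf_zero_left (by linarith) (by push_cast; nlinarith [P.hL1 hj1]),
        tf_zero_right (by linarith) (by nlinarith)]
  intro t t' h0 htt h8
  have ht1 : (6*(j:ℝ)+8)*m ≤ t := by nlinarith
  rw [hform t' (ht1.trans htt) h8, hform t ht1 (htt.trans h8)]
  have hanti := tf_anti (l := L j) (p := (6*j+9)*m + L j) h0 htt
  nlinarith [gam_nonneg τ]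

lemma incbLast (P : Params a τ m N F L) {j : ℕ} (hje : j+1 = N) :
    ∀ t t', (6*(j:ℝ)+9)*m + L j ≤ t → t ≤ t' → t' ≤ a →
      G0 a m N F L t' - G0 a m N F L t ≤ gam τ * (t'-t) := by
  have hm := P.hm
  have hjN : j < N := by omega
  have hL1 := P.hL1 hjN
  have hL2 := P.hL2 hjN
  have haM := P.haM
  have h16 := P.h16
  have hBeq : (6*(N:ℝ)+8)*m = (6*(j:ℝ)+14)*m := by
    have : (N:ℝ) = (j:ℝ)+1 := by exact_mod_cast hje.symm
    rw [this]; ring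
  have pA : ∀ t t', (6*(j:ℝ)+9)*m + L j ≤ t → t ≤ t' → t' ≤ (6*(N:ℝ)+8)*m →
      G0 a m N F L t' - G0 a m N F L t ≤ gam τ * (t'-t) := by
    intro t t' h0 htt h8
    rw [hBeq] at h8
    have ht1 : (6*(j:ℝ)+8)*m ≤ t := by nlinarith
    rw [fR2 P hjN (ht1.trans htt) h8, fR2 P hjN ht1 (htt.trans h8)]
    have hanti := tf_anti (l := L j) (p := (6*j+9)*m + L j) h0 htt
    nlinarith [gam_nonneg τ]
  have pB : ∀ t t', (6*(N:ℝ)+8)*m ≤ t → t ≤ t' → t' ≤ a - 8*m →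
      G0 a m N F L t' - G0 a m N F L t ≤ gam τ * (t'-t) := by
    intro t t' h0 htt h8
    have := abs_le.mp (lipMove P t t' h0 htt h8)
    linarith
  have pC : ∀ t t', a - 8*m ≤ t → t ≤ t' → t' ≤ a →
      G0 a m N F L t' - G0 a m N F L t ≤ gam τ * (t'-t) := by
    intro t t' h0 htt h8
    have := abs_le.mp (lipEnd P t t' h0 htt h8)
    nlinarith [gam_half τ]
  exact incGlue (incGlue pA pB) pC

lemma riseIso (P : Params a τ m N F L) {j : ℕ} (hj : j < N) :
    ∀ t t', (6*(j:ℝ)+9)*m ≤ t → t ≤ t' → t' ≤ (6*(j:ℝ)+9)*m + L j →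
      G0 a m N F L t' - G0 a m N F L t = t' - t := by
  intro t t' h0 htt h8
  have hm := P.hm
  have hL2 := P.hL2 hj
  rw [fR2 P hj (t := t) (by nlinarith) (by nlinarith),
    fR2 P hj (t := t') (by nlinarith) (by nlinarith)]
  rw [tf_rise (by linarith : (6*(j:ℝ)+9)*m + L j - L j ≤ t) (by linarith),
    tf_rise (by linarith : (6*(j:ℝ)+9)*m + L j - L j ≤ t') (by linarith)]
  ring

lemma rigid (P : Params a τ m N F L) {t t' : ℝ} (h0 : 0 ≤ t) (htt : t < t')
    (hta : t' ≤ a) (hiso : G0 a m N F L t' - G0 a m N F L t = t' - t) :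
    ∃ j, j < N ∧ (6*(j:ℝ)+9)*m ≤ t ∧ t' ≤ (6*(j:ℝ)+9)*m + L j := by
  classical
  have hm := P.hm
  have subiso : ∀ u u', t ≤ u → u ≤ u' → u' ≤ t' →
      G0 a m N F L u' - G0 a m N F L u = u' - u := by
    intro u u' hu huu hu'
    have c1 := abs_le.mp (lipAll P t u h0 hu (by linarith))
    have c2 := abs_le.mp (lipAll P u u' (by linarith) huu (by linarith))
    have c3 := abs_le.mp (lipAll P u' t' (by linarith) hu' hta)
    linarith [c1.1, c1.2, c2.1, c2.2, c3.1, c3.2]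
  have key : ∀ u u', t ≤ u → u < u' → u' ≤ t' →
      G0 a m N F L u' - G0 a m N F L u ≤ gam τ * (u'-u) → False := by
    intro u u' hu huu hu' hcon
    have := subiso u u' hu huu.le hu'
    have hg1 := gam_lt_one P.ht0 P.ht1
    nlinarith
  set S := (Finset.range N).filter (fun j : ℕ => (6*(j:ℝ)+9)*m ≤ t) with hS
  rcases S.eq_empty_or_nonempty with hemp | hne
  · exfalso
    have h9 : ¬((6*((0:ℕ):ℝ)+9)*m ≤ t) := by
      intro hcon
      have : (0:ℕ) ∈ S := Finset.mem_filter.2 ⟨Finset.mem_range.2 P.hN, hcon⟩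
      rw [hemp] at this
      exact absurd this (Finset.notMem_empty _)
    push_cast at h9
    push_neg at h9
    refine key t (min t' (9*m)) le_rfl (lt_min htt (by linarith)) (min_le_left _ _)
      (incb0 P t _ h0 (le_min htt.le (by linarith)) (min_le_right _ _))
  · set j := S.max' hne with hj
    have hjS : j ∈ S := S.max'_mem hne
    have hjN : j < N := Finset.mem_range.1 (Finset.mem_filter.1 hjS).1
    have hrj : (6*(j:ℝ)+9)*m ≤ t := (Finset.mem_filter.1 hjS).2
    by_cases hcase : t < (6*(j:ℝ)+9)*m + L j
    · refine ⟨j, hjN, hrj, ?_⟩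
      by_contra hcon
      push_neg at hcon
      rcases Nat.lt_or_ge (j+1) N with hj1 | hj1
      · refine key ((6*(j:ℝ)+9)*m + L j) (min t' ((6*(j:ℝ)+15)*m)) hcase.le
          (lt_min hcon (by nlinarith [P.hL2 hjN])) (min_le_left _ _)
          (incbj P hj1 _ _ le_rfl (le_min hcon.le (by nlinarith [P.hL2 hjN]))
            (min_le_right _ _))
      · have hje : j+1 = N := le_antisymm hjN hj1
        exact key ((6*(j:ℝ)+9)*m + L j) t' hcase.le hcon le_rfl
          (incbLast P hje _ _ le_rfl hcon.le hta)
    · push_neg at hcase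
      exfalso
      rcases Nat.lt_or_ge (j+1) N with hj1 | hj1
      · have htr : t < (6*((j:ℝ)+1)+9)*m := by
          by_contra hge
          push_neg at hge
          have hmem : j+1 ∈ S := Finset.mem_filter.2 ⟨Finset.mem_range.2 hj1, by push_cast; linarith⟩
          have := S.le_max' _ hmem
          omega
        refine key t (min t' ((6*(j:ℝ)+15)*m)) le_rfl
          (lt_min htt (by push_cast at htr; linarith)) (min_le_left _ _)
          (incbj P hj1 _ _ hcase (le_min htt.le (by push_cast at htr; linarith))
            (min_le_right _ _))
      · have hje : j+1 = N := le_antisymm hjN hj1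
        exact key t t' le_rfl htt le_rfl (incbLast P hje _ _ hcase htt.le hta)

end Inc


section MemClose

variable {a τ m : ℝ} {N : ℕ} {F : ℝ → ℝ} {L : ℕ → ℝ}

lemma cover (P : Params a τ m N F L) :
    ∀ k : ℕ, k ≤ N → ∀ t : ℝ, 8*m ≤ t → t ≤ (6*(k:ℝ)+8)*m →
      ∃ j : ℕ, j < N ∧ (6*(j:ℝ)+8)*m ≤ t ∧ t ≤ (6*(j:ℝ)+14)*m := by
  have hm := P.hm
  intro k
  induction k with
  | zero =>
    intro _ t h1 h2
    push_cast at h2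
    exact ⟨0, P.hN, by push_cast; linarith, by push_cast; linarith⟩
  | succ k ih =>
    intro hk t h1 h2
    rcases le_total t ((6*(k:ℝ)+8)*m) with hc | hc
    · exact ih (by omega) t h1 hc
    · exact ⟨k, by omega, hc, by push_cast at h2; linarith⟩

lemma mem01 (P : Params a τ m N F L) {t : ℝ} (h0 : 0 ≤ t) (h1 : t ≤ a) :
    0 ≤ G0 a m N F L t ∧ G0 a m N F L t ≤ 1 := by
  have hm := P.hm
  have hm4 := P.hm4
  have haM := P.haM
  have h16 := P.h16
  rcases le_total t (8*m) with hc | hc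
  · rw [fR1 P hc]
    have hq0 : 0 ≤ max 0 (1 - t/(8*m)) := le_max_left _ _
    have hq1 : max 0 (1 - t/(8*m)) ≤ 1 :=
      max_le (by norm_num) (by linarith [div_nonneg h0 (by positivity : (0:ℝ) ≤ 8*m)])
    have A : 0 ≤ (2*m)*F 0 := mul_nonneg (by linarith) (P.hF0 0)
    have B : 0 ≤ (1-2*m)*F 0 := mul_nonneg (by linarith) (P.hF0 0)
    have C : (2*m)*F 0 * max 0 (1 - t/(8*m)) ≤ (2*m)*F 0 := mul_le_of_le_one_right A hq1
    have B0 : 0 ≤ (2*m)*F 0 * max 0 (1 - t/(8*m)) := mul_nonneg A hq0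
    have D : (2*m)*F 0 ≤ 2*m := by nlinarith [P.hF1 0]
    have E : (1-2*m)*F 0 ≤ 1-2*m := by nlinarith [P.hF1 0]
    constructor
    · nlinarith
    · nlinarith
  rcases le_total t ((6*(N:ℝ)+8)*m) with hc2 | hc2
  · obtain ⟨j, hjN, hj1, hj2⟩ := cover P N le_rfl t hc hc2
    rw [fR2 P hjN hj1 hj2]
    have ht0 := tf_nonneg (L j) ((6*(j:ℝ)+9)*m + L j) t
    have ht1 := tf_le (by linarith [P.hL1 hjN] : (0:ℝ) ≤ L j) ((6*(j:ℝ)+9)*m + L j) t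
    have := P.hL2 hjN
    constructor
    · nlinarith [P.hF0 0, P.hF1 0]
    · nlinarith [P.hF0 0, P.hF1 0]
  rcases le_total t (a - 8*m) with hc3 | hc3
  · rw [fR3 P hc2 hc3]
    constructor
    · nlinarith [P.hF0 (sg a m N t), P.hF1 (sg a m N t)]
    · nlinarith [P.hF0 (sg a m N t), P.hF1 (sg a m N t)]
  · rw [fR4 P hc3]
    have hq0 : 0 ≤ max 0 (1 - (a-t)/(8*m)) := le_max_left _ _
    have hq1 : max 0 (1 - (a-t)/(8*m)) ≤ 1 :=
      max_le (by norm_num) (by linarith [div_nonneg (by linarith : (0:ℝ) ≤ a-t) (by positivity : (0:ℝ) ≤ 8*m)])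
    have A : 0 ≤ (2*m)*F a := mul_nonneg (by linarith) (P.hF0 a)
    have B : 0 ≤ (1-2*m)*F a := mul_nonneg (by linarith) (P.hF0 a)
    have C : (2*m)*F a * max 0 (1 - (a-t)/(8*m)) ≤ (2*m)*F a := mul_le_of_le_one_right A hq1
    have B0 : 0 ≤ (2*m)*F a * max 0 (1 - (a-t)/(8*m)) := mul_nonneg A hq0
    have D : (2*m)*F a ≤ 2*m := by nlinarith [P.hF1 a]
    have E : (1-2*m)*F a ≤ 1-2*m := by nlinarith [P.hF1 a]
    constructor
    · nlinarith
    · nlinarith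

set_option maxHeartbeats 1000000 in
lemma close (P : Params a τ m N F L) {t : ℝ} (h0 : 0 ≤ t) (h1 : t ≤ a) :
    |F t - G0 a m N F L t| ≤ 2*((6*N+16)*m) := by
  have hm := P.hm
  have hm4 := P.hm4
  have haM := P.haM
  have h16 := P.h16
  have hτ1 := P.ht1
  have hτ0 := P.ht0
  rcases le_total t (8*m) with hc | hc
  · rw [fR1 P hc]
    have hq0 : 0 ≤ max 0 (1 - t/(8*m)) := le_max_left _ _
    have hq1 : max 0 (1 - t/(8*m)) ≤ 1 :=
      max_le (by norm_num) (by linarith [div_nonneg h0 (by positivity : (0:ℝ) ≤ 8*m)])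
    have hd : |F t - F 0| ≤ τ * |t - 0| := P.hF t 0
    rw [sub_zero, abs_of_nonneg h0] at hd
    have e : F t - ((1-2*m) * F 0 + (2*m) * F 0 * max 0 (1 - t/(8*m)))
        = (F t - F 0) + (2*m*F 0) * (1 - max 0 (1 - t/(8*m))) := by ring
    rw [e]
    refine (abs_add_le _ _).trans ?_
    have h2 : |(2*m*F 0) * (1 - max 0 (1 - t/(8*m)))| ≤ 2*m := by
      rw [abs_mul]
      have b1 : |2*m*F 0| ≤ 2*m := by
        rw [abs_of_nonneg (by nlinarith [P.hF0 0])]; nlinarith [P.hF1 0]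
      have b2 : |1 - max 0 (1 - t/(8*m))| ≤ 1 := by
        rw [abs_of_nonneg (by linarith)]; linarith
      nlinarith [abs_nonneg ((2:ℝ)*m*F 0), abs_nonneg (1 - max 0 (1 - t/(8*m)))]
    nlinarith
  rcases le_total t ((6*(N:ℝ)+8)*m) with hc2 | hc2
  · obtain ⟨j, hjN, hj1, hj2⟩ := cover P N le_rfl t hc hc2
    rw [fR2 P hjN hj1 hj2]
    have ht0 := tf_nonneg (L j) ((6*(j:ℝ)+9)*m + L j) t
    have ht1 := tf_le (by linarith [P.hL1 hjN] : (0:ℝ) ≤ L j) ((6*(j:ℝ)+9)*m + L j) t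
    have hL2 := P.hL2 hjN
    have hd : |F t - F 0| ≤ τ * |t - 0| := P.hF t 0
    rw [sub_zero, abs_of_nonneg h0] at hd
    have e : F t - ((1-2*m) * F 0 + tf (L j) ((6*j+9)*m + L j) t)
        = (F t - F 0) + ((2*m) * F 0 - tf (L j) ((6*j+9)*m + L j) t) := by ring
    rw [e]
    refine (abs_add_le _ _).trans ?_
    have h2 : |(2*m) * F 0 - tf (L j) ((6*(j:ℝ)+9)*m + L j) t| ≤ 2*m := by
      rw [abs_le]
      constructor
      · nlinarith [P.hF0 0]
      · nlinarith [P.hF1 0]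
    nlinarith
  rcases le_total t (a - 8*m) with hc3 | hc3
  · rw [fR3 P hc2 hc3]
    have hd : |F t - F (sg a m N t)| ≤ τ * |t - sg a m N t| := P.hF t _
    have hsgc := sg_close P h0 h1
    rw [abs_sub_comm] at hsgc
    have e : F t - (1-2*m) * F (sg a m N t)
        = (F t - F (sg a m N t)) + (2*m) * F (sg a m N t) := by ring
    rw [e]
    refine (abs_add_le _ _).trans ?_
    have h2 : |(2*m) * F (sg a m N t)| ≤ 2*m := by
      rw [abs_of_nonneg (by nlinarith [P.hF0 (sg a m N t)])]
      nlinarith [P.hF1 (sg a m N t)]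
    have h3 : τ * |t - sg a m N t| ≤ (6*N+16)*m := by
      have hmul := mul_le_mul_of_nonneg_left hsgc P.ht0
      have hMp : (0:ℝ) ≤ (6*N+16)*m := by positivity
      nlinarith
    nlinarith [hd.trans h3]
  · rw [fR4 P hc3]
    have hq0 : 0 ≤ max 0 (1 - (a-t)/(8*m)) := le_max_left _ _
    have hq1 : max 0 (1 - (a-t)/(8*m)) ≤ 1 :=
      max_le (by norm_num) (by linarith [div_nonneg (by linarith : (0:ℝ) ≤ a-t) (by positivity : (0:ℝ) ≤ 8*m)])
    have hd : |F t - F a| ≤ τ * |t - a| := P.hF t a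
    rw [abs_of_nonpos (by linarith : t - a ≤ 0), neg_sub] at hd
    have e : F t - ((1-2*m) * F a + (2*m) * F a * max 0 (1 - (a-t)/(8*m)))
        = (F t - F a) + (2*m*F a) * (1 - max 0 (1 - (a-t)/(8*m))) := by ring
    rw [e]
    refine (abs_add_le _ _).trans ?_
    have h2 : |(2*m*F a) * (1 - max 0 (1 - (a-t)/(8*m)))| ≤ 2*m := by
      rw [abs_mul]
      have b1 : |2*m*F a| ≤ 2*m := by
        rw [abs_of_nonneg (by nlinarith [P.hF0 a])]; nlinarith [P.hF1 a]
      have b2 : |1 - max 0 (1 - (a-t)/(8*m))| ≤ 1 := by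
        rw [abs_of_nonneg (by linarith)]; linarith
      nlinarith [abs_nonneg ((2:ℝ)*m*F a), abs_nonneg (1 - max 0 (1 - (a-t)/(8*m)))]
    nlinarith

lemma endpoint0 (P : Params a τ m N F L) : G0 a m N F L 0 = F 0 := by
  have hm := P.hm
  rw [fR1 P (by linarith : (0:ℝ) ≤ 8*m)]
  rw [zero_div, sub_zero, max_eq_right (by norm_num : (0:ℝ) ≤ 1)]
  ring

lemma endpointa (P : Params a τ m N F L) : G0 a m N F L a = F a := by
  have hm := P.hm
  rw [fR4 P (by linarith : a - 8*m ≤ a)]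
  rw [sub_self, zero_div, sub_zero, max_eq_right (by norm_num : (0:ℝ) ≤ 1)]
  ring

end MemClose


section Shift

variable {a τ m : ℝ} {N : ℕ}

lemma ll_inj {F1 F2 : ℝ → ℝ} {L1 L2 : ℕ → ℝ} (P1 : Params a τ m N F1 L1)
    (P2 : Params a τ m N F2 L2) {i j : ℕ} (hi : i < N) (hj : j < N)
    (heq : L1 i = L2 j) : i = j := by
  have hm := P1.hm
  have hN : (0:ℝ) < N := by exact_mod_cast P1.hN
  have hN0 : (N:ℝ) ≠ 0 := ne_of_gt hN
  have main : ∀ x y : ℝ, y + 1 ≤ x → m*(1 + x/(4*N)) ≤ m*(1 + y/(4*N)) + m/(8*N) → False := by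
    intro x y hxy H
    have h8 : (0:ℝ) ≤ 8*N := by positivity
    have H2 := mul_le_mul_of_nonneg_left H h8
    have idx : (8*(N:ℝ)) * (m * (1 + x/(4*N))) = 8*(N:ℝ)*m + 2*(x*m) := by
      field_simp
      ring
    have idy : (8*(N:ℝ)) * (m * (1 + y/(4*N))) = 8*(N:ℝ)*m + 2*(y*m) := by
      field_simp
      ring
    have idc : (8*(N:ℝ)) * (m/(8*N)) = m := by field_simp
    rw [idx, mul_add, idy, idc] at H2
    nlinarith
  by_contra hne
  rcases lt_or_gt_of_ne hne with hlt | hgt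
  · have hij : (i:ℝ)+1 ≤ j := by exact_mod_cast hlt
    refine main (j:ℝ) (i:ℝ) hij ?_
    calc m*(1 + (j:ℝ)/(4*N)) ≤ L2 j := (P2.hL j hj).1
      _ = L1 i := heq.symm
      _ ≤ m*(1 + (i:ℝ)/(4*N)) + m/(8*N) := (P1.hL i hi).2
  · have hij : (j:ℝ)+1 ≤ i := by exact_mod_cast hgt
    refine main (i:ℝ) (j:ℝ) hij ?_
    calc m*(1 + (i:ℝ)/(4*N)) ≤ L1 i := (P1.hL i hi).1
      _ = L2 j := heq
      _ ≤ m*(1 + (j:ℝ)/(4*N)) + m/(8*N) := (P2.hL j hj).2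

lemma nest {F2 : ℝ → ℝ} {L2 : ℕ → ℝ} (P2 : Params a τ m N F2 L2) {j j' : ℕ}
    (hj : j < N) (hj' : j' < N)
    (h1 : (6*(j':ℝ)+9)*m ≤ (6*(j:ℝ)+9)*m)
    (h2 : (6*(j:ℝ)+9)*m + L2 j ≤ (6*(j':ℝ)+9)*m + L2 j') : j' = j := by
  have hm := P2.hm
  by_contra hne
  rcases lt_or_gt_of_ne hne with hlt | hgt
  · have hij : (j':ℝ)+1 ≤ j := by exact_mod_cast hlt
    nlinarith [P2.hL1 hj, P2.hL2 hj']
  · have hij : (j:ℝ)+1 ≤ j' := by exact_mod_cast hgt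
    nlinarith

set_option maxHeartbeats 2000000 in
lemma shift {F1 F2 : ℝ → ℝ} {L1 L2 : ℕ → ℝ} (P1 : Params a τ m N F1 L1)
    (P2 : Params a τ m N F2 L2) {ε : ℝ} (hε0 : 0 ≤ ε) (hεa : ε ≤ a/2)
    (hH : ∀ t, 0 ≤ t → t ≤ a - ε → G0 a m N F1 L1 (t+ε) = G0 a m N F2 L2 t) :
    ε = 0 ∧ ∀ j, j < N → L1 j = L2 j := by
  have hm := P1.hm
  have ha := P1.ha
  have hM8 := P1.hMa8
  have key : ∀ j, j < N → ε = 0 ∧ L1 j = L2 j := by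
    intro j hj
    have hjR : (j:ℝ)+1 ≤ N := by exact_mod_cast hj
    have hj0 : (0:ℝ) ≤ (j:ℝ) := Nat.cast_nonneg j
    have hL2j1 := P2.hL1 hj
    have hL2j2 := P2.hL2 hj
    have hrj0 : (0:ℝ) ≤ (6*(j:ℝ)+9)*m := mul_nonneg (by positivity) hm.le
    have hrb : (6*(j:ℝ)+9)*m + L2 j ≤ (6*(N:ℝ)+16)*m := by nlinarith
    have isoX : G0 a m N F1 L1 ((6*(j:ℝ)+9)*m + L2 j + ε) - G0 a m N F1 L1 ((6*(j:ℝ)+9)*m + ε)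
        = ((6*(j:ℝ)+9)*m + L2 j + ε) - ((6*(j:ℝ)+9)*m + ε) := by
      have e1 := hH ((6*(j:ℝ)+9)*m) hrj0 (by nlinarith)
      have e2 := hH ((6*(j:ℝ)+9)*m + L2 j) (by nlinarith) (by nlinarith)
      rw [e2, e1]
      have hiso := riseIso P2 hj ((6*(j:ℝ)+9)*m) ((6*(j:ℝ)+9)*m + L2 j) le_rfl
        (by linarith) le_rfl
      linarith
    obtain ⟨i, hiN, hi1, hi2⟩ := rigid P1 (by linarith : (0:ℝ) ≤ (6*(j:ℝ)+9)*m + ε)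
      (by linarith : (6*(j:ℝ)+9)*m + ε < (6*(j:ℝ)+9)*m + L2 j + ε)
      (by nlinarith : (6*(j:ℝ)+9)*m + L2 j + ε ≤ a) isoX
    have hL1i2 := P1.hL2 hiN
    have hL1i1 := P1.hL1 hiN
    have hiR : (i:ℝ)+1 ≤ N := by exact_mod_cast hiN
    have hi0 : (0:ℝ) ≤ (i:ℝ) := Nat.cast_nonneg i
    have hri : ε + 8*m ≤ (6*(i:ℝ)+9)*m := by nlinarith
    have hrib : (6*(i:ℝ)+9)*m + L1 i ≤ (6*(N:ℝ)+16)*m := by nlinarith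
    have isoY : G0 a m N F2 L2 ((6*(i:ℝ)+9)*m - ε + L1 i) - G0 a m N F2 L2 ((6*(i:ℝ)+9)*m - ε)
        = L1 i := by
      have e1 := hH ((6*(i:ℝ)+9)*m - ε) (by linarith) (by nlinarith)
      have e2 := hH ((6*(i:ℝ)+9)*m - ε + L1 i) (by linarith) (by nlinarith)
      have q1 : (6*(i:ℝ)+9)*m - ε + ε = (6*(i:ℝ)+9)*m := by ring
      have q2 : (6*(i:ℝ)+9)*m - ε + L1 i + ε = (6*(i:ℝ)+9)*m + L1 i := by ring
      rw [q1] at e1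
      rw [q2] at e2
      rw [← e1, ← e2]
      have hiso := riseIso P1 hiN ((6*(i:ℝ)+9)*m) ((6*(i:ℝ)+9)*m + L1 i) le_rfl
        (by linarith) le_rfl
      linarith
    obtain ⟨j', hj'N, hj'1, hj'2⟩ := rigid P2 (by linarith : (0:ℝ) ≤ (6*(i:ℝ)+9)*m - ε)
      (by linarith : (6*(i:ℝ)+9)*m - ε < (6*(i:ℝ)+9)*m - ε + L1 i)
      (by nlinarith : (6*(i:ℝ)+9)*m - ε + L1 i ≤ a) (by rw [isoY]; ring)
    have hjj : j' = j := by
      apply nest P2 hj hj'N (by linarith) (by linarith)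
    rw [hjj] at hj'1 hj'2
    have hee : (6*(i:ℝ)+9)*m - ε = (6*(j:ℝ)+9)*m := le_antisymm (by linarith) hj'1
    have hLL : L1 i = L2 j := le_antisymm (by linarith) (by linarith)
    have hij : i = j := ll_inj P1 P2 hiN hj hLL
    constructor
    · rw [hij] at hee
      linarith
    · rw [← hLL, hij]
  obtain ⟨hε, -⟩ := key 0 P1.hN
  exact ⟨hε, fun j hj => (key j hj).2⟩

end Shift


section Gmap

variable {X : Type*} [MetricSpace X]

noncomputable def FF (a : ℝ) (ha : 0 ≤ a) (f : C(X, C(Set.Icc (0:ℝ) a, ℝ))) (x : X) (v : ℝ) : ℝ :=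
  f x ⟨min a (max 0 v), ⟨le_min ha (le_max_left 0 v), min_le_left a _⟩⟩

noncomputable def LL (m δ2 : ℝ) (N : ℕ) (pts : ℕ → X) (x : X) (j : ℕ) : ℝ :=
  m * (1 + (j:ℝ)/(4*N) + (max 0 (1 - dist x (pts j)/δ2))/(8*N))

noncomputable def gmap (a : ℝ) (ha : 0 ≤ a) (m δ2 : ℝ) (N : ℕ) (pts : ℕ → X)
    (f : C(X, C(Set.Icc (0:ℝ) a, ℝ))) : C(X, C(Set.Icc (0:ℝ) a, ℝ)) :=
  ContinuousMap.curry
    ⟨fun p : X × Set.Icc (0:ℝ) a => G0 a m N (FF a ha f p.1) (LL m δ2 N pts p.1) (p.2 : ℝ), by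
      have hev : Continuous fun r : X × Set.Icc (0:ℝ) a => f r.1 r.2 := by fun_prop
      have hsgc : Continuous (sg a m N) := by
        unfold sg
        fun_prop
      have hval : Continuous fun p : X × Set.Icc (0:ℝ) a => (p.2 : ℝ) := by fun_prop
      have hFcomp : ∀ (v : (X × Set.Icc (0:ℝ) a) → ℝ), Continuous v →
          Continuous fun p => FF a ha f p.1 (v p) := by
        intro v hv
        unfold FF
        have hq : Continuous fun p : X × Set.Icc (0:ℝ) a =>
            ((p.1, ⟨min a (max 0 (v p)), ⟨le_min ha (le_max_left 0 (v p)), min_le_left a _⟩⟩) :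
              X × Set.Icc (0:ℝ) a) := by
          apply Continuous.prodMk continuous_fst
          apply Continuous.subtype_mk
          exact Continuous.min continuous_const (Continuous.max continuous_const hv)
        exact hev.comp hq
      unfold G0
      apply Continuous.add
      apply Continuous.add
      apply Continuous.add
      · exact Continuous.mul continuous_const (hFcomp _ (hsgc.comp hval))
      · exact Continuous.mul (Continuous.mul continuous_const (hFcomp _ continuous_const))
          (Continuous.max continuous_const (by fun_prop))
      · exact Continuous.mul (Continuous.mul continuous_const (hFcomp _ continuous_const))
          (Continuous.max continuous_const (by fun_prop))
      · apply continuous_finset_sum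
        intro j _
        unfold tf LL
        have hLj : Continuous fun p : X × Set.Icc (0:ℝ) a =>
            m * (1 + (j:ℝ)/(4*N) + (max 0 (1 - dist p.1 (pts j)/δ2))/(8*N)) := by fun_prop
        apply Continuous.max continuous_const
        apply Continuous.sub hLj
        apply Continuous.abs
        exact Continuous.sub hval (Continuous.add continuous_const hLj)⟩

lemma gmap_apply (a : ℝ) (ha : 0 ≤ a) (m δ2 : ℝ) (N : ℕ) (pts : ℕ → X)
    (f : C(X, C(Set.Icc (0:ℝ) a, ℝ))) (x : X) (t : Set.Icc (0:ℝ) a) :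
    gmap a ha m δ2 N pts f x t = G0 a m N (FF a ha f x) (LL m δ2 N pts x) (t : ℝ) := rfl

end Gmap

end Stmt9Aux


set_option maxHeartbeats 1000000 in
open Stmt9Aux in
/-- If X is a compact metric space and f : X → L[0,a] is continuous with a
uniform Lipschitz bound τ < 1, then for every δ > 0 there is a continuous g : X → L[0,a],
δ-close to f and agreeing with f at the endpoints, such that whenever x, y ∈ X and
0 ≤ ε ≤ a/2 satisfy g(x)(t+ε) = g(y)(t) for all t ∈ [0, a-ε], we get ε = 0 and
d(x,y) < δ. -/
theorem stmt9 (X : Type*) [MetricSpace X] [CompactSpace X]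
    (a : ℝ) (ha : 0 < a)
    (f : C(X, C(Set.Icc (0:ℝ) a, ℝ))) (hfL : ∀ x, f x ∈ La a)
    (τ : ℝ) (hτ0 : 0 < τ) (hτ1 : τ < 1)
    (hτ : ∀ (x : X) (s t : Set.Icc (0:ℝ) a), |f x s - f x t| ≤ τ * |(s:ℝ) - (t:ℝ)|)
    (δ : ℝ) (hδ : 0 < δ) :
    ∃ g : C(X, C(Set.Icc (0:ℝ) a, ℝ)),
      (∀ x, g x ∈ La a) ∧
      (∀ (x : X) (t : Set.Icc (0:ℝ) a), |f x t - g x t| < δ) ∧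
      (∀ x : X, g x ⟨0, Set.left_mem_Icc.2 ha.le⟩ = f x ⟨0, Set.left_mem_Icc.2 ha.le⟩ ∧
        g x ⟨a, Set.right_mem_Icc.2 ha.le⟩ = f x ⟨a, Set.right_mem_Icc.2 ha.le⟩) ∧
      (∀ (x y : X) (ε : ℝ) (hε0 : 0 ≤ ε) (hε : ε ≤ a / 2),
        (∀ t : ℝ, ∀ ht0 : 0 ≤ t, ∀ ht1 : t ≤ a - ε,
          g x ⟨t + ε, ⟨by linarith, by linarith⟩⟩ = g y ⟨t, ⟨ht0, by linarith⟩⟩) →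
        ε = 0 ∧ dist x y < δ) := by
  classical
  rcases isEmpty_or_nonempty X with hE | hNE
  · exact ⟨f, hfL, fun x => isEmptyElim x, fun x => isEmptyElim x, fun x y => isEmptyElim x⟩
  obtain ⟨x0⟩ := hNE
  have hδ2 : 0 < δ/2 := by linarith
  -- finite δ/2-net
  obtain ⟨s, hs⟩ := IsCompact.elim_finite_subcover isCompact_univ
    (fun z : X => Metric.ball z (δ/2)) (fun z => Metric.isOpen_ball)
    (fun x _ => Set.mem_iUnion.2 ⟨x, Metric.mem_ball_self hδ2⟩)
  set N := s.card with hNdef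
  have hsne : s.Nonempty := by
    rcases Set.mem_iUnion₂.1 (hs (Set.mem_univ x0)) with ⟨z, hz, _⟩
    exact ⟨z, hz⟩
  have hN : 0 < N := Finset.card_pos.2 hsne
  set e := s.equivFin with hedef
  set pts : ℕ → X := fun k => if h : k < N then ((e.symm ⟨k, h⟩ : s) : X) else x0 with hptsdef
  -- net property
  have unet : ∀ x : X, ∃ j, j < N ∧ dist x (pts j) < δ/2 := by
    intro x
    rcases Set.mem_iUnion₂.1 (hs (Set.mem_univ x)) with ⟨z, hz, hxz⟩
    refine ⟨(e ⟨z, hz⟩ : Fin N).1, (e ⟨z, hz⟩).2, ?_⟩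
    have hp : pts ((e ⟨z, hz⟩ : Fin N).1) = z := by
      rw [hptsdef]
      simp only
      rw [dif_pos (e ⟨z, hz⟩).2]
      have : (⟨(e ⟨z, hz⟩ : Fin N).1, (e ⟨z, hz⟩).2⟩ : Fin N) = e ⟨z, hz⟩ := rfl
      rw [this, Equiv.symm_apply_apply]
    rw [hp]
    exact Metric.mem_ball.1 hxz
  -- the parameter m
  set m := min (min δ (a*(1-τ))) 1 / (8*(6*(N:ℝ)+16)) with hmdef
  have hdenpos : (0:ℝ) < 8*(6*(N:ℝ)+16) := by positivity
  have hminpos : 0 < min (min δ (a*(1-τ))) 1 :=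
    lt_min (lt_min hδ (by nlinarith)) one_pos
  have hm : 0 < m := div_pos hminpos hdenpos
  have hexact : (6*(N:ℝ)+16)*m = min (min δ (a*(1-τ))) 1 / 8 := by
    rw [hmdef]
    field_simp
  have hMδ : (6*(N:ℝ)+16)*m ≤ δ/8 := by
    rw [hexact]
    have h1 : min (min δ (a*(1-τ))) 1 ≤ δ := le_trans (min_le_left _ _) (min_le_left _ _)
    linarith
  have hMa : (6*(N:ℝ)+16)*m ≤ a*(1-τ)/8 := by
    rw [hexact]
    have h1 : min (min δ (a*(1-τ))) 1 ≤ a*(1-τ) := le_trans (min_le_left _ _) (min_le_right _ _)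
    linarith
  have hM1 : (6*(N:ℝ)+16)*m ≤ 1/8 := by
    rw [hexact]
    have h1 : min (min δ (a*(1-τ))) 1 ≤ 1 := min_le_right _ _
    linarith
  have hm4 : m ≤ 1/4 := by
    have h16 : 16*m ≤ (6*(N:ℝ)+16)*m := by
      nlinarith [hm.le, (by positivity : (0:ℝ) ≤ (N:ℝ))]
    linarith
  -- the parameter bundles
  have hP : ∀ x : X, Params a τ m N (FF a ha.le f x) (LL m (δ/2) N pts x) := by
    intro x
    refine ⟨hm, hm4, hN, ha, hτ0.le, hτ1, hMa, ?_, ?_, ?_, ?_⟩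
    · intro v w
      refine le_trans (hτ x _ _) ?_
      apply mul_le_mul_of_nonneg_left _ hτ0.le
      refine le_trans (lip_min a _ _) (lip_max 0 v w)
    · intro v
      exact ((hfL x).2 _).1
    · intro v
      exact ((hfL x).2 _).2
    · intro j hj
      have h8N : (0:ℝ) < 8*(N:ℝ) := by positivity
      have hu0 : (0:ℝ) ≤ max 0 (1 - dist x (pts j)/(δ/2)) := le_max_left _ _
      have hu1 : max 0 (1 - dist x (pts j)/(δ/2)) ≤ 1 :=
        max_le (by norm_num) (by linarith [div_nonneg (dist_nonneg : 0 ≤ dist x (pts j)) hδ2.le])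
      constructor
      · rw [LL]
        have h2 : (0:ℝ) ≤ max 0 (1 - dist x (pts j)/(δ/2)) / (8*N) := div_nonneg hu0 h8N.le
        nlinarith
      · rw [LL]
        have h2 : max 0 (1 - dist x (pts j)/(δ/2)) / (8*N) ≤ 1/(8*N) :=
          (div_le_div_iff_of_pos_right h8N).2 hu1
        have h3 : m * (max 0 (1 - dist x (pts j)/(δ/2)) / (8*N)) ≤ m * (1/(8*N)) :=
          mul_le_mul_of_nonneg_left h2 hm.le
        have h4 : m * ((1:ℝ)/(8*N)) = m/(8*N) := by ring
        nlinarith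
  -- the map g
  refine ⟨gmap a ha.le m (δ/2) N pts f, ?_, ?_, ?_, ?_⟩
  · -- membership in La
    intro x
    constructor
    · apply LipschitzWith.of_dist_le_mul
      intro t t'
      rw [NNReal.coe_one, one_mul, Real.dist_eq, Subtype.dist_eq, Real.dist_eq]
      rw [gmap_apply, gmap_apply]
      rcases le_total (t:ℝ) (t':ℝ) with hc | hc
      · rw [abs_sub_comm]
        refine le_trans (lipAll (hP x) _ _ t.2.1 hc t'.2.2) ?_
        rw [abs_of_nonpos (by linarith), neg_sub]
      · refine le_trans (lipAll (hP x) _ _ t'.2.1 hc t.2.2) ?_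
        rw [abs_of_nonneg (by linarith : (0:ℝ) ≤ (t:ℝ) - (t':ℝ))]
    · intro t
      rw [gmap_apply]
      exact mem01 (hP x) t.2.1 t.2.2
  · -- closeness
    intro x t
    rw [gmap_apply]
    have hFt : FF a ha.le f x (t:ℝ) = f x t := by
      have hpt : min a (max 0 (t:ℝ)) = (t:ℝ) := by
        rw [max_eq_right t.2.1]
        exact min_eq_right t.2.2
      unfold FF
      exact congrArg (f x) (Subtype.ext hpt)
    have hcl := close (hP x) t.2.1 t.2.2
    rw [hFt] at hcl
    have : 2*((6*(N:ℝ)+16)*m) ≤ δ/4 := by linarith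
    linarith
  · -- endpoints
    intro x
    constructor
    · rw [gmap_apply]
      have h0 : ((⟨0, Set.left_mem_Icc.2 ha.le⟩ : Set.Icc (0:ℝ) a) : ℝ) = 0 := rfl
      rw [h0, endpoint0 (hP x)]
      have hpt : min a (max 0 (0:ℝ)) = (0:ℝ) := by
        rw [max_eq_right le_rfl]
        exact min_eq_right ha.le
      unfold FF
      exact congrArg (f x) (Subtype.ext hpt)
    · rw [gmap_apply]
      have h0 : ((⟨a, Set.right_mem_Icc.2 ha.le⟩ : Set.Icc (0:ℝ) a) : ℝ) = a := rfl
      rw [h0, endpointa (hP x)]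
      have hpt : min a (max 0 a) = a := by
        rw [max_eq_right ha.le]
        exact min_self a
      unfold FF
      exact congrArg (f x) (Subtype.ext hpt)
  · -- the shift property
    intro x y ε hε0 hεa hg
    have hH : ∀ t, 0 ≤ t → t ≤ a - ε →
        G0 a m N (FF a ha.le f x) (LL m (δ/2) N pts x) (t+ε)
          = G0 a m N (FF a ha.le f y) (LL m (δ/2) N pts y) t := by
      intro t h0 h1
      exact hg t h0 h1
    obtain ⟨hε, hLeq⟩ := shift (hP x) (hP y) hε0 hεa hH
    refine ⟨hε, ?_⟩
    -- from equality of the L's, deduce the net coordinates agree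
    obtain ⟨j, hjN, hdx⟩ := unet x
    have hLj := hLeq j hjN
    rw [LL, LL] at hLj
    have h8N : (0:ℝ) < 8*(N:ℝ) := by positivity
    have h1 := mul_left_cancel₀ (ne_of_gt hm) hLj
    have h2 : max 0 (1 - dist x (pts j)/(δ/2)) / (8*(N:ℝ))
        = max 0 (1 - dist y (pts j)/(δ/2)) / (8*(N:ℝ)) := by linarith
    rw [div_eq_div_iff (ne_of_gt h8N) (ne_of_gt h8N)] at h2
    have h3 : max 0 (1 - dist x (pts j)/(δ/2)) = max 0 (1 - dist y (pts j)/(δ/2)) :=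
      mul_right_cancel₀ (ne_of_gt h8N) h2
    have hux : 0 < max 0 (1 - dist x (pts j)/(δ/2)) := by
      have : 0 < 1 - dist x (pts j)/(δ/2) := by
        have := (div_lt_one hδ2).2 hdx
        linarith
      exact lt_of_lt_of_le this (le_max_right _ _)
    have huy : 0 < max 0 (1 - dist y (pts j)/(δ/2)) := h3 ▸ hux
    have hdy : dist y (pts j) < δ/2 := by
      by_contra hc
      push_neg at hc
      have hz : 1 - dist y (pts j)/(δ/2) ≤ 0 := by
        have := (one_le_div hδ2).2 hc
        linarith
      rw [max_eq_left hz] at huy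
      exact lt_irrefl 0 huy
    calc dist x y ≤ dist x (pts j) + dist y (pts j) := dist_triangle_right x y (pts j)
      _ < δ := by linarith
end

section
/- Let (X,T) be a flow with fixed point set F, and let h : F → F_L be a continuous map into the constant functions of L(ℝ). Then for every δ > 0 there exists a continuous ℝ-equivariant map f : X → L(ℝ) with f|_F = h and Lip(f) ≤ δ, where Lip(f) = sup over x ∈ X and s ≠ t of |f(x)(s)-f(x)(t)|/|s-t|. In particular the space C_{T,h}(X, L(ℝ)) of equivariant continuous extensions of h is nonempty. -/
/-- L(ℝ): the 1-Lipschitz functions ℝ → [0,1], as a subset of C(ℝ,ℝ) with the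
compact-open topology (= uniform convergence on compact sets). -/
def LR : Set C(ℝ, ℝ) := {φ | LipschitzWith 1 φ ∧ ∀ t : ℝ, φ t ∈ Set.Icc (0:ℝ) 1}

/-- Let (X,T) be a flow with fixed point set F and let h : F → F_L be a
continuous map into the constant functions of L(ℝ) (recorded by the constant value,
a continuous map F → [0,1]).  For every δ > 0 there is a continuous ℝ-equivariant map
f : X → L(ℝ) with f|_F = h and Lip(f) ≤ δ.  In particular C_{T,h}(X, L(ℝ)) ≠ ∅. -/
theorem stmt10 (X : Type*) [MetricSpace X] [CompactSpace X]
    (T : ℝ → X → X) (hT : Continuous fun p : ℝ × X => T p.1 p.2)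
    (hT0 : ∀ x, T 0 x = x) (hTadd : ∀ s t x, T (s + t) x = T s (T t x))
    (h : C({x : X // ∀ t : ℝ, T t x = x}, ℝ))
    (hh : ∀ x, h x ∈ Set.Icc (0:ℝ) 1)
    (δ : ℝ) (hδ : 0 < δ) :
    ∃ f : C(X, C(ℝ, ℝ)),
      (∀ x, f x ∈ LR) ∧
      (∀ (s : ℝ) (x : X) (t : ℝ), f (T s x) t = f x (t + s)) ∧
      (∀ x : {x : X // ∀ t : ℝ, T t x = x}, ∀ t : ℝ, f x.1 t = h x) ∧
      (∀ (x : X) (s t : ℝ), |f x s - f x t| ≤ δ * |s - t|) := by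
  classical
  -- the fixed point set
  set F : Set X := {x : X | ∀ t : ℝ, T t x = x} with hF
  have hFclosed : IsClosed F := by
    have : F = ⋂ t : ℝ, {x : X | T t x = x} := by
      ext x; simp [hF, Set.mem_iInter]
    rw [this]
    exact isClosed_iInter fun t =>
      isClosed_eq (hT.comp (Continuous.prodMk_right t)) continuous_id
  -- Tietze extension of h
  obtain ⟨h0, hh0⟩ := h.exists_restrict_eq hFclosed
  -- clamp it into [0,1]
  set h1 : X → ℝ := fun x => max 0 (min 1 (h0 x)) with hh1def
  have h1cont : Continuous h1 :=
    continuous_const.max (continuous_const.min h0.continuous)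
  have h1mem : ∀ x, h1 x ∈ Set.Icc (0:ℝ) 1 := fun x =>
    ⟨le_max_left _ _, max_le (by norm_num) (min_le_left _ _)⟩
  have h1F : ∀ x : {x : X // ∀ t : ℝ, T t x = x}, h1 x.1 = h x := by
    intro x
    have hx0 : h0 x.1 = h x := by
      have := ContinuousMap.congr_fun hh0 x
      simpa [ContinuousMap.restrict] using this
    have := hh x
    rw [hh1def]
    simp only [hx0]
    rw [min_eq_right this.2, max_eq_right this.1]
  -- the window length
  set ε : ℝ := min 1 δ with hε
  have hε0 : 0 < ε := lt_min one_pos hδ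
  set L : ℝ := 2 / ε with hL
  have hL0 : 0 < L := by positivity
  -- the averaged function
  set g : X → ℝ → ℝ := fun x t => (∫ u in (0:ℝ)..L, h1 (T (t + u) x)) / L with hg
  have hgcont : Continuous fun p : X × ℝ => g p.1 p.2 := by
    apply Continuous.div_const
    apply intervalIntegral.continuous_parametric_intervalIntegral_of_continuous'
    exact h1cont.comp (hT.comp ((continuous_snd.comp continuous_fst).add
      continuous_snd |>.prodMk (continuous_fst.comp continuous_fst)))
  -- rewrite g as a sliding-window integral
  have hgshift : ∀ x t, g x t = (∫ u in t..(t + L), h1 (T u x)) / L := by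
    intro x t
    rw [hg]
    simp only []
    rw [intervalIntegral.integral_comp_add_left (fun u => h1 (T u x)) t, add_zero]
  have hint : ∀ (x : X) (a b : ℝ),
      IntervalIntegrable (fun u => h1 (T u x)) MeasureTheory.volume a b := by
    intro x a b
    exact (h1cont.comp (hT.comp (continuous_id.prodMk continuous_const))).intervalIntegrable a b
  have hbound : ∀ (x : X) (a b : ℝ), |∫ u in a..b, h1 (T u x)| ≤ |b - a| := by
    intro x a b
    have := intervalIntegral.norm_integral_le_of_norm_le_const
      (f := fun u => h1 (T u x)) (a := a) (b := b) (C := 1) ?_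
    · simpa using this
    · intro u _
      have := h1mem (T u x)
      rw [Real.norm_eq_abs, abs_le]
      constructor <;> linarith [this.1, this.2]
  -- Lipschitz estimate
  have hlip : ∀ (x : X) (s t : ℝ), |g x s - g x t| ≤ ε * |s - t| := by
    intro x s t
    have h1i := hint x s t
    have h2i := hint x t (s + L)
    have h3i := hint x (s + L) (t + L)
    have e1 : (∫ u in s..t, h1 (T u x)) + ∫ u in t..(s+L), h1 (T u x)
        = ∫ u in s..(s+L), h1 (T u x) :=
      intervalIntegral.integral_add_adjacent_intervals h1i h2i
    have e2 : (∫ u in t..(s+L), h1 (T u x)) + ∫ u in (s+L)..(t+L), h1 (T u x)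
        = ∫ u in t..(t+L), h1 (T u x) :=
      intervalIntegral.integral_add_adjacent_intervals h2i h3i
    rw [hgshift, hgshift, div_sub_div_same, abs_div, abs_of_pos hL0]
    rw [div_le_iff₀ hL0]
    have key : (∫ u in s..(s+L), h1 (T u x)) - ∫ u in t..(t+L), h1 (T u x)
        = (∫ u in s..t, h1 (T u x)) - ∫ u in (s+L)..(t+L), h1 (T u x) := by
      rw [← e1, ← e2]; ring
    rw [key]
    calc |(∫ u in s..t, h1 (T u x)) - ∫ u in (s+L)..(t+L), h1 (T u x)|
        ≤ |∫ u in s..t, h1 (T u x)| + |∫ u in (s+L)..(t+L), h1 (T u x)| := abs_sub _ _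
      _ ≤ |t - s| + |t + L - (s + L)| := add_le_add (hbound x s t) (hbound x (s+L) (t+L))
      _ = 2 * |s - t| := by rw [abs_sub_comm t s]; ring_nf; rw [abs_sub_comm]; ring
      _ = ε * |s - t| * L := by
          rw [hL]; field_simp
  -- the continuous map
  refine ⟨ContinuousMap.curry ⟨fun p : X × ℝ => g p.1 p.2, hgcont⟩, ?_, ?_, ?_, ?_⟩
  · intro x
    constructor
    · apply LipschitzWith.of_dist_le_mul
      intro s t
      simp only [ContinuousMap.curry_apply, ContinuousMap.coe_mk, Real.dist_eq,
        NNReal.coe_one, one_mul]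
      calc |g x s - g x t| ≤ ε * |s - t| := hlip x s t
        _ ≤ 1 * |s - t| := by
            apply mul_le_mul_of_nonneg_right (min_le_left _ _) (abs_nonneg _)
        _ = |s - t| := one_mul _
    · intro t
      simp only [ContinuousMap.curry_apply, ContinuousMap.coe_mk]
      rw [hgshift]
      constructor
      · apply div_nonneg _ hL0.le
        apply intervalIntegral.integral_nonneg (by linarith)
        intro u _; exact (h1mem _).1
      · rw [div_le_one hL0]
        calc (∫ u in t..(t+L), h1 (T u x)) ≤ |∫ u in t..(t+L), h1 (T u x)| := le_abs_self _
          _ ≤ |t + L - t| := hbound x t (t + L)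
          _ = L := by rw [show t + L - t = L by ring, abs_of_pos hL0]
  · intro s x t
    simp only [ContinuousMap.curry_apply, ContinuousMap.coe_mk]
    rw [hg]
    have heq : (∫ u in (0:ℝ)..L, h1 (T (t + u) (T s x)))
        = ∫ u in (0:ℝ)..L, h1 (T (t + s + u) x) := by
      apply intervalIntegral.integral_congr
      intro u _
      have : T (t + u) (T s x) = T (t + s + u) x := by
        rw [← hTadd]; ring_nf
      simp only [this]
    simp only []
    rw [heq]
  · intro x t
    simp only [ContinuousMap.curry_apply, ContinuousMap.coe_mk]
    rw [hg]
    have : ∀ u : ℝ, h1 (T (t + u) x) = h x := by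
      intro u; rw [x.2 (t + u)]; exact h1F x
    simp only [this]
    rw [intervalIntegral.integral_const]
    simp only [sub_zero, smul_eq_mul]
    field_simp
  · intro x s t
    simp only [ContinuousMap.curry_apply, ContinuousMap.coe_mk]
    calc |g x s - g x t| ≤ ε * |s - t| := hlip x s t
      _ ≤ δ * |s - t| := mul_le_mul_of_nonneg_right (min_le_right _ _) (abs_nonneg _)
end

section
/- Let (X,T) be a flow and p ∈ X a non-fixed point. Then there exist a > 0 and a closed set S ⊆ X containing p such that the map [-a,a] × S → X, (t,x) ↦ T_t x, is a continuous injection whose image contains an open neighborhood of p. (Existence of a local section around any non-fixed point.) -/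
open intervalIntegral Set

/-- Existence of a local section around any non-fixed point of a flow:
there are a > 0 and a closed set S ∋ p such that (t,x) ↦ T_t x is injective on
[-a,a] × S and its image contains an open neighborhood of p. -/
theorem stmt11 (X : Type*) [MetricSpace X] [CompactSpace X]
    (T : ℝ → X → X) (hT : Continuous fun p : ℝ × X => T p.1 p.2)
    (hT0 : ∀ x, T 0 x = x) (hTadd : ∀ s t x, T (s + t) x = T s (T t x))
    (p : X) (hp : ∃ t : ℝ, T t p ≠ p) :
    ∃ a : ℝ, 0 < a ∧ ∃ S : Set X, IsClosed S ∧ p ∈ S ∧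
      Set.InjOn (fun q : ℝ × X => T q.1 q.2) (Set.Icc (-a) a ×ˢ S) ∧
      ∃ U : Set X, IsOpen U ∧ p ∈ U ∧
        U ⊆ (fun q : ℝ × X => T q.1 q.2) '' (Set.Icc (-a) a ×ˢ S) := by
  classical
  -- get a positive time t0 with T t0 p ≠ p
  obtain ⟨t1, ht1⟩ := hp
  have hinv : ∀ t x, T (-t) (T t x) = x := by
    intro t x; rw [← hTadd]; simp [hT0]
  obtain ⟨t0, ht0pos, ht0⟩ : ∃ t0 : ℝ, 0 < t0 ∧ T t0 p ≠ p := by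
    rcases lt_trichotomy t1 0 with h | h | h
    · refine ⟨-t1, by linarith, ?_⟩
      intro hc
      apply ht1
      have := congrArg (T t1) hc
      rw [← hTadd, add_neg_cancel, hT0] at this
      exact this.symm
    · exact absurd (h ▸ hT0 p) ht1
    · exact ⟨t1, h, ht1⟩
  set L : X → ℝ := fun x => ∫ s in (0:ℝ)..t0, dist (T s x) p with hLdef
  set H : ℝ → X → ℝ := fun u x => dist (T (t0 + u) x) p - dist (T u x) p with hHdef
  have hLcont : Continuous L := by
    apply continuous_parametric_intervalIntegral_of_continuous'
    exact (hT.comp (continuous_snd.prodMk continuous_fst)).dist continuous_const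
  have hHcont : Continuous fun q : ℝ × X => H q.1 q.2 := by
    apply Continuous.sub
    · exact ((hT.comp (((continuous_const.add continuous_fst)).prodMk continuous_snd)).dist
        continuous_const)
    · exact (hT.dist continuous_const)
  have hint : ∀ x a b, IntervalIntegrable (fun s => dist (T s x) p) MeasureTheory.volume a b := by
    intro x a b
    exact ((hT.comp (continuous_id.prodMk continuous_const)).dist continuous_const).intervalIntegrable a b
  have hintH : ∀ x a b, IntervalIntegrable (fun v => H v x) MeasureTheory.volume a b := by
    intro x a b
    exact (hHcont.comp (continuous_id.prodMk continuous_const)).intervalIntegrable a b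
  -- key identity
  have key : ∀ (x : X) (u : ℝ), L (T u x) = L x + ∫ v in (0:ℝ)..u, H v x := by
    intro x u
    have h1 : L (T u x) = ∫ s in u..(t0 + u), dist (T s x) p := by
      have : (fun s => dist (T s (T u x)) p) = fun s => dist (T (s + u) x) p := by
        funext s; rw [← hTadd]
      rw [hLdef]; simp only [this]
      rw [intervalIntegral.integral_comp_add_right (fun s => dist (T s x) p) u, zero_add]
    have h2 : (∫ s in t0..(t0 + u), dist (T s x) p) = ∫ v in (0:ℝ)..u, dist (T (t0 + v) x) p := by
      rw [intervalIntegral.integral_comp_add_left (fun s => dist (T s x) p) t0, add_zero]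
    have h3 : (∫ s in u..(0:ℝ), dist (T s x) p) + (∫ s in (0:ℝ)..t0, dist (T s x) p)
        + (∫ s in t0..(t0+u), dist (T s x) p) = ∫ s in u..(t0+u), dist (T s x) p := by
      rw [intervalIntegral.integral_add_adjacent_intervals (hint x u 0) (hint x 0 t0)]
      exact intervalIntegral.integral_add_adjacent_intervals (hint x u t0) (hint x t0 (t0+u))
    have h4 : (∫ v in (0:ℝ)..u, H v x)
        = (∫ v in (0:ℝ)..u, dist (T (t0 + v) x) p) - ∫ v in (0:ℝ)..u, dist (T v x) p := by
      rw [hHdef]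
      exact intervalIntegral.integral_sub
        (((hT.comp ((continuous_const.add continuous_id).prodMk continuous_const)).dist
          continuous_const).intervalIntegrable 0 u) (hint x 0 u)
    have h5 : (∫ s in u..(0:ℝ), dist (T s x) p) = - ∫ s in (0:ℝ)..u, dist (T s x) p :=
      intervalIntegral.integral_symm 0 u
    rw [h1, ← h3, h5, h2, h4, hLdef]
    ring
  -- choose ε for positivity of H near (0,p)
  obtain ⟨ε, hεpos, hε⟩ : ∃ ε > 0, ∀ u x, |u| ≤ ε → dist x p ≤ ε → 0 < H u x := by
    have hopen : IsOpen {q : ℝ × X | 0 < H q.1 q.2} := isOpen_lt continuous_const hHcont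
    have hmem : ((0 : ℝ), p) ∈ {q : ℝ × X | 0 < H q.1 q.2} := by
      simp only [mem_setOf_eq, hHdef, add_zero, hT0, dist_self, sub_zero, dist_pos]
      exact ht0
    obtain ⟨δ, hδpos, hδ⟩ := Metric.isOpen_iff.1 hopen _ hmem
    refine ⟨δ/2, by linarith, ?_⟩
    intro u x hu hx
    have hmem2 : ((u, x) : ℝ × X) ∈ Metric.ball ((0:ℝ), p) δ := by
      rw [Metric.mem_ball, Prod.dist_eq]
      simp only [Real.dist_eq, sub_zero, dist_comm]
      have : dist p x ≤ δ/2 := by rw [dist_comm]; exact hx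
      exact max_lt (by linarith [abs_nonneg u]) (by linarith)
    exact hδ hmem2
  -- choose η for staying near p
  obtain ⟨η, hηpos, hηle, hη⟩ : ∃ η > 0, η ≤ ε ∧ ∀ t q, |t| ≤ η → dist q p ≤ η →
      dist (T t q) p ≤ ε := by
    have hopen : IsOpen {q : ℝ × X | dist (T q.1 q.2) p < ε} :=
      isOpen_lt (hT.dist continuous_const) continuous_const
    have hmem : ((0 : ℝ), p) ∈ {q : ℝ × X | dist (T q.1 q.2) p < ε} := by
      simp [hT0, hεpos]
    obtain ⟨δ, hδpos, hδ⟩ := Metric.isOpen_iff.1 hopen _ hmem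
    refine ⟨min (δ/2) ε, by positivity, min_le_right _ _, ?_⟩
    intro t q ht hq
    have h1 : |t| < δ := lt_of_le_of_lt ht (lt_of_le_of_lt (min_le_left _ _) (by linarith))
    have h2 : dist q p < δ := lt_of_le_of_lt hq (lt_of_le_of_lt (min_le_left _ _) (by linarith))
    have := hδ (show ((t, q) : ℝ × X) ∈ Metric.ball ((0:ℝ), p) δ by
      rw [Metric.mem_ball, Prod.dist_eq]
      simp only [Real.dist_eq, sub_zero]
      exact max_lt h1 h2)
    exact le_of_lt this
  set a : ℝ := min (ε/2) η with hadef
  have hapos : 0 < a := lt_min (by linarith) hηpos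
  have ha2ε : 2 * a ≤ ε := by
    have := min_le_left (ε/2) η; simp only [hadef] at *; linarith [min_le_left (ε/2) η]
  have haη : a ≤ η := min_le_right _ _
  -- strict-motion lemma: L changes along flow for points near p
  have hmove : ∀ x u, dist x p ≤ ε → |u| ≤ ε → u ≠ 0 → L (T u x) ≠ L x := by
    intro x u hx hu hu0
    rw [key x u]
    rcases lt_or_gt_of_ne hu0 with h | h
    · have hpos : 0 < ∫ v in u..(0:ℝ), H v x := by
        apply intervalIntegral.intervalIntegral_pos_of_pos_on (hintH x u 0) _ h
        intro v hv
        refine hε v x ?_ hx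
        rw [abs_le] at hu ⊢
        constructor <;> [linarith [hv.1]; linarith [hv.2, hεpos]]
      have : (∫ v in (0:ℝ)..u, H v x) < 0 := by
        rw [intervalIntegral.integral_symm]; linarith
      linarith
    · have hpos : 0 < ∫ v in (0:ℝ)..u, H v x := by
        apply intervalIntegral.intervalIntegral_pos_of_pos_on (hintH x 0 u) _ h
        intro v hv
        refine hε v x ?_ hx
        rw [abs_le] at hu ⊢
        constructor <;> [linarith [hv.1, hεpos]; linarith [hv.2]]
      linarith
  refine ⟨a, hapos, Metric.closedBall p ε ∩ {x | L x = L p}, ?_, ?_, ?_, ?_⟩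
  · exact Metric.isClosed_closedBall.inter (isClosed_eq hLcont continuous_const)
  · exact ⟨Metric.mem_closedBall_self (le_of_lt hεpos), rfl⟩
  · -- injectivity
    rintro ⟨t, x⟩ ⟨ht, hxball, hxL⟩ ⟨s, y⟩ ⟨hs, hyball, hyL⟩ hxy
    simp only at hxy
    have hyx : T (t - s) x = y := by
      have : T (-s) (T t x) = T (-s) (T s y) := by rw [hxy]
      rwa [← hTadd, ← hTadd, neg_add_cancel, hT0, show -s + t = t - s by ring] at this
    have hts : t = s := by
      by_contra hne
      have hu0 : t - s ≠ 0 := sub_ne_zero.2 hne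
      have huabs : |t - s| ≤ ε := by
        rw [mem_Icc] at ht hs
        rw [abs_le]; constructor <;> linarith [ht.1, ht.2, hs.1, hs.2,
          min_le_left (ε/2) η]
      exact hmove x (t - s) hxball huabs hu0 (by rw [hyx, hyL, hxL])
    have : x = y := by
      have := hyx; rw [hts, sub_self, hT0] at this; exact this
    simp [hts, this]
  · -- the open neighborhood
    have hLsplit : ∀ q, L (T a q) - L q = ∫ v in (0:ℝ)..a, H v q := by
      intro q; rw [key]; ring
    refine ⟨Metric.ball p η ∩ {q | L (T (-a) q) < L p} ∩ {q | L p < L (T a q)}, ?_, ?_, ?_⟩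
    · refine ((Metric.isOpen_ball.inter ?_).inter ?_)
      · exact isOpen_lt (hLcont.comp (hT.comp (continuous_const.prodMk continuous_id)))
          continuous_const
      · exact isOpen_lt continuous_const
          (hLcont.comp (hT.comp (continuous_const.prodMk continuous_id)))
    · refine ⟨⟨Metric.mem_ball_self hηpos, ?_⟩, ?_⟩
      · show L (T (-a) p) < L p
        rw [key]
        have hpos : 0 < ∫ v in (-a)..(0:ℝ), H v p := by
          apply intervalIntegral.intervalIntegral_pos_of_pos_on (hintH p (-a) 0) _
            (by linarith)
          intro v hv
          refine hε v p ?_ (by simp [le_of_lt hεpos])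
          rw [abs_le]; constructor <;> [linarith [hv.1, ha2ε, hapos]; linarith [hv.2, hεpos]]
        have : (∫ v in (0:ℝ)..(-a), H v p) < 0 := by
          rw [intervalIntegral.integral_symm]; linarith
        linarith
      · show L p < L (T a p)
        rw [key]
        have hpos : 0 < ∫ v in (0:ℝ)..a, H v p := by
          apply intervalIntegral.intervalIntegral_pos_of_pos_on (hintH p 0 a) _ hapos
          intro v hv
          refine hε v p ?_ (by simp [le_of_lt hεpos])
          rw [abs_le]; constructor <;> [linarith [hv.1, hεpos]; linarith [hv.2, ha2ε, hapos]]
        linarith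
    · rintro q ⟨⟨hqball, hq1⟩, hq2⟩
      simp only [mem_setOf_eq] at hq1 hq2
      -- IVT on t ↦ L (T t q)
      have hφ : ContinuousOn (fun t => L (T t q)) (Icc (-a) a) :=
        (hLcont.comp (hT.comp (continuous_id.prodMk continuous_const))).continuousOn
      have hIVT := intermediate_value_Icc (by linarith : -a ≤ a) hφ
      have hmem : L p ∈ Icc (L (T (-a) q)) (L (T a q)) := ⟨le_of_lt hq1, le_of_lt hq2⟩
      obtain ⟨t, htmem, htval⟩ := hIVT hmem
      refine ⟨(-t, T t q), ⟨?_, ?_, htval⟩, ?_⟩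
      · show -t ∈ Icc (-a) a
        rw [mem_Icc]; constructor <;> linarith [htmem.1, htmem.2]
      · rw [Metric.mem_closedBall]
        apply hη t q _ (le_of_lt hqball)
        rw [mem_Icc] at htmem
        rw [abs_le]; constructor <;> linarith [htmem.1, htmem.2, haη]
      · show T (-t) (T t q) = q
        exact hinv t q
end

section
/- Let (X,T) be a flow, p ∈ X with T_c p ≠ p for some c < 0, and let h : X → [0,1] be continuous with h = 1 on a neighborhood of p and T_c p ∉ supp h. Define f(x) = ∫_c^0 h(T_t x) dt. If A is a closed neighborhood of p and 0 < a < |c| satisfy ⋃_{|t|≤a} T_t(A) ⊆ {h=1} and ⋃_{|t|≤a} T_{t+c}(A) ∩ supp h = ∅, then f(T_t x) = f(x) + t for all x ∈ A and |t| ≤ a; consequently S = {x ∈ A : f(x) = f(p)} yields an injective map [-a,a] × S → X, (t,x) ↦ T_t x. -/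
open MeasureTheory

/-- Construction of a local section.  With h = 1 on ⋃_{|t|≤a} T_t(A) and
⋃_{|t|≤a} T_{t+c}(A) disjoint from supp h, the function f(x) = ∫_c^0 h(T_t x) dt
satisfies f(T_t x) = f(x) + t for x ∈ A, |t| ≤ a; consequently (t,x) ↦ T_t x is
injective on [-a,a] × S where S = {x ∈ A : f(x) = f(p)}. -/
theorem stmt12 (X : Type*) [MetricSpace X] [CompactSpace X]
    (T : ℝ → X → X) (hT : Continuous fun q : ℝ × X => T q.1 q.2)
    (hT0 : ∀ x, T 0 x = x) (hTadd : ∀ s t x, T (s + t) x = T s (T t x))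
    (p : X) (c : ℝ) (hc : c < 0) (hpc : T c p ≠ p)
    (h : X → ℝ) (hcont : Continuous h) (hrange : ∀ x, h x ∈ Set.Icc (0:ℝ) 1)
    (hone : ∃ V ∈ nhds p, ∀ x ∈ V, h x = 1)
    (hsuppp : T c p ∉ tsupport h)
    (f : X → ℝ) (hf : ∀ x, f x = ∫ t in c..(0:ℝ), h (T t x))
    (A : Set X) (hA : IsClosed A) (hAnhds : A ∈ nhds p)
    (a : ℝ) (ha0 : 0 < a) (ha : a < |c|)
    (hA1 : ∀ x ∈ A, ∀ t : ℝ, |t| ≤ a → h (T t x) = 1)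
    (hA2 : ∀ x ∈ A, ∀ t : ℝ, |t| ≤ a → T (t + c) x ∉ tsupport h) :
    (∀ x ∈ A, ∀ t : ℝ, |t| ≤ a → f (T t x) = f x + t) ∧
    Set.InjOn (fun q : ℝ × X => T q.1 q.2)
      (Set.Icc (-a) a ×ˢ {x ∈ A | f x = f p}) := by
  have key : ∀ x ∈ A, ∀ t : ℝ, |t| ≤ a → f (T t x) = f x + t := by
    intro x hx t ht
    set g : ℝ → ℝ := fun u => h (T u x) with hg
    have hgc : Continuous g := hcont.comp (hT.comp (continuous_id.prodMk continuous_const))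
    have hgi : ∀ u v : ℝ, IntervalIntegrable g MeasureTheory.volume u v :=
      fun u v => hgc.intervalIntegrable u v
    have h1 : f (T t x) = ∫ s in (c + t)..(0 + t), g s := by
      rw [hf]
      rw [← intervalIntegral.integral_comp_add_right]
      apply intervalIntegral.integral_congr
      intro s _
      simp only [g, ← hTadd]
    have h2 : (∫ s in (c + t)..(0 + t), g s)
        = (∫ s in (c + t)..c, g s) + (∫ s in c..(0:ℝ), g s) + (∫ s in (0:ℝ)..t, g s) := by
      rw [intervalIntegral.integral_add_adjacent_intervals (hgi _ _) (hgi _ _)]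
      rw [zero_add]
      rw [intervalIntegral.integral_add_adjacent_intervals (hgi _ _) (hgi _ _)]
    have h3 : (∫ s in (c + t)..c, g s) = 0 := by
      have : ∀ s ∈ Set.uIcc (c + t) c, g s = 0 := by
        intro s hs
        have hs' : |s - c| ≤ a := by
          rcases Set.mem_uIcc.1 hs with ⟨h1', h2'⟩ | ⟨h1', h2'⟩
          · rw [abs_le]; constructor <;> [linarith [neg_abs_le t, abs_le.1 ht]; linarith]
          · rw [abs_le]; constructor <;> [linarith; linarith [le_abs_self t, abs_le.1 ht]]
        have := hA2 x hx (s - c) hs'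
        rw [sub_add_cancel] at this
        exact image_eq_zero_of_notMem_tsupport (f := h) this
      calc (∫ s in (c + t)..c, g s) = ∫ s in (c + t)..c, (0:ℝ) :=
            intervalIntegral.integral_congr (fun s hs => this s hs)
        _ = 0 := by simp
    have h4 : (∫ s in (0:ℝ)..t, g s) = t := by
      have : ∀ s ∈ Set.uIcc (0:ℝ) t, g s = 1 := by
        intro s hs
        apply hA1 x hx
        rcases Set.mem_uIcc.1 hs with ⟨h1', h2'⟩ | ⟨h1', h2'⟩
        · rw [abs_le]; constructor <;> [linarith [neg_abs_le t, abs_le.1 ht]; linarith [le_abs_self t, abs_le.1 ht]]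
        · rw [abs_le]; constructor <;> [linarith [neg_abs_le t, abs_le.1 ht]; linarith [le_abs_self t, abs_le.1 ht]]
      calc (∫ s in (0:ℝ)..t, g s) = ∫ s in (0:ℝ)..t, (1:ℝ) :=
            intervalIntegral.integral_congr (fun s hs => this s hs)
        _ = t := by simp
    rw [h1, h2, h3, h4, hf x]
    ring_nf
    exact add_comm _ _
  refine ⟨key, ?_⟩
  rintro ⟨t, x⟩ ⟨htm, hx, hfx⟩ ⟨s, y⟩ ⟨hsm, hy, hfy⟩ heq
  simp only at heq
  have hta : |t| ≤ a := abs_le.2 ⟨htm.1, htm.2⟩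
  have hsa : |s| ≤ a := abs_le.2 ⟨hsm.1, hsm.2⟩
  have hfeq : f x + t = f y + s := by
    rw [← key x hx t hta, ← key y hy s hsa, heq]
  have hts : t = s := by rw [hfx, hfy] at hfeq; linarith
  subst hts
  have hxy : x = y := by
    have := congrArg (T (-t)) heq
    rwa [← hTadd, ← hTadd, neg_add_cancel, hT0, hT0] at this
  simp [hxy]
end
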